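/- arXiv:1910.12289 — 9 statements merged into one kernel-verified Lean document; each statement's English description precedes it below -/
import Mathlib

section
/- Let λ > 1 be a real number, N ≥ 1 an integer, β_0 < β_1 < ⋯ < β_N real numbers, and c_0, …, c_N ∈ ℂ. If φ : ℝ → ℂ is integrable, compactly supported, not almost everywhere zero, and satisfies φ(x) = Σ_{k=0}^N c_k φ(λx − β_k) for almost every x ∈ ℝ, then |c_0| < λ and |c_N| < λ. -/
/-!
Let `G t = ∫_{x ≤ t} ‖φ x‖` and let `L` be the largest zero of this continuous nondecreasing
function, i.e. the left end of the essential support of `φ`. Just to the right of `L` only the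
translate by `β 0` survives in the equation, so there `G t = (‖c 0‖ / λ) G (λ t - β 0)`.
Comparing supports forces `L` to be the fixed point of `t ↦ λ t - β 0`, hence
`G (L + s) = (‖c 0‖ / λ) G (L + λ s)` for small `s > 0`. If `‖c 0‖ ≥ λ`, iterating gives
`G (L + δ) ≤ G (L + δ λ⁻ⁿ) → G L = 0`, although `G > 0` to the right of `L`.
The bound for `c N` follows by applying this to `x ↦ φ (-x)`.
-/

open MeasureTheory Filter Set

lemma quasiMeasurePreserving_mul_sub {a : ℝ} (ha : a ≠ 0) (b : ℝ) :
    Measure.QuasiMeasurePreserving (fun x : ℝ ↦ a * x - b) :=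
  (measurePreserving_sub_right volume b).quasiMeasurePreserving.comp
    (Measure.quasiMeasurePreserving_smul volume ha)

section LeftMass

variable {E : Type*} [NormedAddCommGroup E] {f : ℝ → E}

noncomputable def leftMass (f : ℝ → E) (t : ℝ) : ℝ := ∫ x in Iic t, ‖f x‖

lemma leftMass_nonneg (f : ℝ → E) (t : ℝ) : 0 ≤ leftMass f t :=
  integral_nonneg fun _ ↦ norm_nonneg _

lemma leftMass_mono (hf : Integrable f) : Monotone (leftMass f) := fun _ _ hst ↦
  setIntegral_mono_set hf.norm.integrableOn (Eventually.of_forall fun _ ↦ norm_nonneg _)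
    (Iic_subset_Iic.2 hst).eventuallyLE

lemma continuous_leftMass (hf : Integrable f) : Continuous (leftMass f) := by
  have h : leftMass f = fun t ↦ leftMass f 0 + ∫ x in (0 : ℝ)..t, ‖f x‖ := by
    ext t
    rw [← intervalIntegral.integral_Iic_sub_Iic hf.norm.integrableOn hf.norm.integrableOn]
    simp only [leftMass, add_sub_cancel]
  rw [h]
  exact continuous_const.add
    (intervalIntegral.continuous_primitive (fun _ _ ↦ hf.norm.intervalIntegrable) 0)

lemma leftMass_eq_zero_iff (hf : Integrable f) {t : ℝ} :
    leftMass f t = 0 ↔ ∀ᵐ x, x ≤ t → f x = 0 := by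
  rw [leftMass, integral_eq_zero_iff_of_nonneg (fun _ ↦ norm_nonneg _) hf.norm.integrableOn,
    EventuallyEq, ae_restrict_iff' measurableSet_Iic]
  simp only [Pi.zero_apply, norm_eq_zero, mem_Iic]

lemma leftMass_comp_mul_sub (f : ℝ → E) {a : ℝ} (ha : 0 < a) (b t : ℝ) :
    leftMass (fun x ↦ f (a * x - b)) t = a⁻¹ * leftMass f (a * t - b) := by
  have h : (Iic t).indicator (fun x ↦ ‖f (a * x - b)‖)
      = fun x ↦ (Iic (a * t - b)).indicator (fun y ↦ ‖f y‖) (a * x - b) := by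
    ext x
    simp only [indicator, mem_Iic, sub_le_sub_iff_right, mul_le_mul_iff_right₀ ha]
  rw [leftMass, leftMass, ← integral_indicator measurableSet_Iic,
    ← integral_indicator measurableSet_Iic, h,
    Measure.integral_comp_mul_left
      (fun y ↦ (Iic (a * t - b)).indicator (fun y ↦ ‖f y‖) (y - b)),
    integral_sub_right_eq_self, abs_of_pos (inv_pos.2 ha), smul_eq_mul]

lemma exists_isGreatest_leftMass_eq_zero (hf : Integrable f)
    (hsupp : ∃ R : ℝ, ∀ᵐ x : ℝ, R < |x| → f x = 0) (hne : ¬ f =ᵐ[volume] 0) :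
    ∃ L, IsGreatest {t | leftMass f t = 0} L := by
  obtain ⟨R, hR⟩ := hsupp
  refine ⟨_, (isClosed_eq (continuous_leftMass hf) continuous_const).isGreatest_csSup
    ⟨-|R| - 1, (leftMass_eq_zero_iff hf).2 ?_⟩ ⟨|R|, fun t ht ↦ ?_⟩⟩
  · filter_upwards [hR] with x hx hxR
    exact hx (by cases abs_cases x <;> cases abs_cases R <;> linarith)
  · by_contra! hRt
    refine hne ?_
    filter_upwards [hR, (leftMass_eq_zero_iff hf).1 ht] with x hxR hxt
    rcases le_or_gt x t with h | h
    · exact hxt h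
    · exact hxR (by cases abs_cases x <;> cases abs_cases R <;> linarith)

end LeftMass

lemma leftMass_eq_mul_of_twoScale {ι 𝕜 : Type*} [Fintype ι] [DecidableEq ι] [NormedField 𝕜]
    {f : ℝ → 𝕜} {lam : ℝ} (hlam : 0 < lam) {β : ι → ℝ} {c : ι → 𝕜}
    (heq : ∀ᵐ x : ℝ, f x = ∑ k, c k * f (lam * x - β k)) {L : ℝ}
    (hL : ∀ᵐ x : ℝ, x ≤ L → f x = 0) (i : ι) {t : ℝ}
    (ht : ∀ k ≠ i, lam * t - β k ≤ L) :
    leftMass f t = ‖c i‖ / lam * leftMass f (lam * t - β i) := by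
  have hterm : ∀ k, ∀ᵐ x : ℝ, lam * x - β k ≤ L → f (lam * x - β k) = 0 := fun k ↦
    (quasiMeasurePreserving_mul_sub hlam.ne' (β k)).ae hL
  have hloc : ∀ᵐ x : ℝ, x ∈ Iic t → ‖f x‖ = ‖c i‖ * ‖f (lam * x - β i)‖ := by
    filter_upwards [heq, ae_all_iff.2 hterm] with x hx hxk hxt
    rw [hx, Finset.sum_eq_single i (fun k _ hk ↦ ?_) (by simp), norm_mul]
    have : lam * x ≤ lam * t := mul_le_mul_of_nonneg_left hxt hlam.le
    rw [hxk k (by linarith [ht k hk]), mul_zero]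
  calc leftMass f t = ‖c i‖ * leftMass (fun x ↦ f (lam * x - β i)) t := by
        rw [leftMass, setIntegral_congr_ae measurableSet_Iic hloc, integral_const_mul]; rfl
    _ = ‖c i‖ / lam * leftMass f (lam * t - β i) := by
        rw [leftMass_comp_mul_sub f hlam, div_eq_mul_inv, mul_assoc]

lemma le_of_forall_apply_mul_le {α : Type*} [TopologicalSpace α] [Preorder α]
    [ClosedIciTopology α] {g : ℝ → α} {lam δ : ℝ} (hlam : 1 < lam) (hδ : 0 < δ)
    (hg : ContinuousAt g 0) (h : ∀ s, 0 < s → s ≤ δ → g (lam * s) ≤ g s) :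
    g δ ≤ g 0 := by
  have hlam0 : 0 < lam := one_pos.trans hlam
  have hseq : ∀ n : ℕ, g δ ≤ g (δ * lam⁻¹ ^ n) := by
    intro n
    induction n with
    | zero => simp
    | succ n ih =>
      have hpos : 0 < δ * lam⁻¹ ^ (n + 1) := by positivity
      have hle : δ * lam⁻¹ ^ (n + 1) ≤ δ :=
        mul_le_of_le_one_right hδ.le
          (pow_le_one₀ (by positivity) (inv_le_one_of_one_le₀ hlam.le))
      have hstep : lam * (δ * lam⁻¹ ^ (n + 1)) = δ * lam⁻¹ ^ n := by
        rw [pow_succ]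
        field_simp
      exact ih.trans (hstep ▸ h _ hpos hle)
  have hlim : Tendsto (fun n : ℕ ↦ δ * lam⁻¹ ^ n) atTop (nhds 0) := by
    simpa using (tendsto_pow_atTop_nhds_zero_of_lt_one (by positivity)
      (inv_lt_one_of_one_lt₀ hlam)).const_mul δ
  exact ge_of_tendsto' (hg.tendsto.comp hlim) hseq

lemma eq_of_isGreatest_zero_of_forall_eq_mul {G : ℝ → ℝ} (hG : Monotone G)
    (hG0 : ∀ t, 0 ≤ G t) {L lam r b b' : ℝ} (hL : IsGreatest {t | G t = 0} L)
    (hlam : 0 < lam) (hr : 0 < r)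
    (hbb' : b < b') (hself : ∀ t ≤ (L + b') / lam, G t = r * G (lam * t - b)) :
    lam * L - b = L := by
  have hm : (L + b) / lam ≤ (L + b') / lam := by gcongr
  apply le_antisymm
  · rcases le_total L ((L + b') / lam) with h | h
    · have : G (lam * L - b) = 0 := by
        have := hself L h
        rw [hL.1] at this
        exact (mul_eq_zero.1 this.symm).resolve_left hr.ne'
      exact hL.2 this
    · have hzero : G ((L + b') / lam) = 0 := le_antisymm (hL.1 ▸ hG h) (hG0 _)
      rw [hself _ le_rfl, mul_eq_zero] at hzero
      have := hL.2 (hzero.resolve_left hr.ne')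
      rw [mul_div_cancel₀ _ hlam.ne'] at this
      linarith
  · have h0 : G ((L + b) / lam) = 0 := by
      rw [hself _ hm, mul_div_cancel₀ _ hlam.ne', add_sub_cancel_right, hL.1, mul_zero]
    have := hL.2 h0
    rw [div_le_iff₀ hlam] at this
    linarith

theorem norm_coeff_zero_lt_of_twoScale {lam : ℝ} (hlam : 1 < lam) {N : ℕ} (hN : 1 ≤ N)
    {β : Fin (N + 1) → ℝ} (hβ : StrictMono β) {c : Fin (N + 1) → ℂ} {φ : ℝ → ℂ}
    (hint : Integrable φ) (hsupp : ∃ R : ℝ, ∀ᵐ x : ℝ, R < |x| → φ x = 0)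
    (hne : ¬ φ =ᵐ[volume] 0) (heq : ∀ᵐ x : ℝ, φ x = ∑ k, c k * φ (lam * x - β k)) :
    ‖c 0‖ < lam := by
  have hlam0 : 0 < lam := one_pos.trans hlam
  obtain ⟨L, hL⟩ := exists_isGreatest_leftMass_eq_zero hint hsupp hne
  by_contra! hc
  set G := leftMass φ
  let k₁ : Fin (N + 1) := ⟨1, by omega⟩
  have hβ₁ : β 0 < β k₁ := hβ (Fin.mk_lt_mk.2 one_pos)
  have hself : ∀ t ≤ (L + β k₁) / lam, G t = ‖c 0‖ / lam * G (lam * t - β 0) := by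
    refine fun t ht ↦ leftMass_eq_mul_of_twoScale hlam0 heq ((leftMass_eq_zero_iff hint).1 hL.1)
      0 fun k hk ↦ ?_
    have : β k₁ ≤ β k := hβ.monotone (Fin.mk_le_of_le_val (Fin.pos_iff_ne_zero.2 hk))
    linarith [(le_div_iff₀' hlam0).1 ht]
  have hfix : lam * L - β 0 = L :=
    eq_of_isGreatest_zero_of_forall_eq_mul (leftMass_mono hint) (leftMass_nonneg φ) hL hlam0
      (div_pos (hlam0.trans_le hc) hlam0) hβ₁ hself
  set δ := (β k₁ - β 0) / lam
  have hδ : 0 < δ := div_pos (by linarith) hlam0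
  have hmass : G (L + δ) ≤ G (L + 0) := by
    refine le_of_forall_apply_mul_le (g := fun s ↦ G (L + s)) hlam hδ
      ((continuous_leftMass hint).comp (continuous_const_add L)).continuousAt fun s hs hsδ ↦ ?_
    have hedge : lam * (L + s) - β 0 = L + lam * s := by linear_combination hfix
    calc G (L + lam * s) ≤ ‖c 0‖ / lam * G (L + lam * s) :=
          le_mul_of_one_le_left (leftMass_nonneg φ _) ((one_le_div hlam0).2 hc)
      _ = G (L + s) := by
          rw [hself (L + s) ?_, hedge]
          rw [le_div_iff₀' hlam0]
          linarith [(le_div_iff₀' hlam0).1 hsδ]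
  rw [add_zero, hL.1] at hmass
  exact (lt_add_of_pos_right L hδ).not_ge
    (hL.2 (le_antisymm hmass (leftMass_nonneg φ _)))

lemma twoScale_comp_neg {N : ℕ} {lam : ℝ} {β : Fin (N + 1) → ℝ} {c : Fin (N + 1) → ℂ}
    {φ : ℝ → ℂ} (heq : ∀ᵐ x : ℝ, φ x = ∑ k, c k * φ (lam * x - β k)) :
    ∀ᵐ x : ℝ, φ (-x) = ∑ k : Fin (N + 1), c k.rev * φ (-(lam * x - -β k.rev)) := by
  filter_upwards
    [(Measure.measurePreserving_neg (volume : Measure ℝ)).quasiMeasurePreserving.ae heq] with x hx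
  rw [hx, ← Equiv.sum_comp Fin.revPerm]
  refine Finset.sum_congr rfl fun k _ ↦ ?_
  simp only [Fin.revPerm_apply]
  ring_nf

/-- If `φ` is an integrable, compactly supported (a.e.), not a.e.-zero solution of the
two-scale difference equation `φ(x) = ∑ k, c k * φ(λx - β k)` with `λ > 1` and strictly
increasing translates `β`, then `|c 0| < λ` and `|c N| < λ`. -/
theorem two_scale_extreme_coeffs_lt (lam : ℝ) (hlam : 1 < lam) (N : ℕ) (hN : 1 ≤ N)
    (β : Fin (N + 1) → ℝ) (hβ : StrictMono β) (c : Fin (N + 1) → ℂ)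
    (φ : ℝ → ℂ) (hint : Integrable φ)
    (hsupp : ∃ R : ℝ, ∀ᵐ x : ℝ, R < |x| → φ x = 0)
    (hne : ¬ φ =ᵐ[volume] 0)
    (heq : ∀ᵐ x : ℝ, φ x = ∑ k : Fin (N + 1), c k * φ (lam * x - β k)) :
    ‖c 0‖ < lam ∧ ‖c (Fin.last N)‖ < lam := by
  have hneg := (Measure.measurePreserving_neg (volume : Measure ℝ)).quasiMeasurePreserving
  refine ⟨norm_coeff_zero_lt_of_twoScale hlam hN hβ hint hsupp hne heq, ?_⟩
  obtain ⟨R, hR⟩ := hsupp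
  have hβ' : StrictMono fun k : Fin (N + 1) ↦ -β k.rev := fun _ _ hab ↦
    neg_lt_neg (hβ (Fin.rev_lt_rev.2 hab))
  have hsupp' : ∃ R : ℝ, ∀ᵐ x : ℝ, R < |x| → φ (-x) = 0 :=
    ⟨R, by filter_upwards [hneg.ae hR] with x hx; simpa only [abs_neg] using hx⟩
  have hne' : ¬ (fun x ↦ φ (-x)) =ᵐ[volume] 0 := fun h ↦
    hne (by filter_upwards [hneg.ae h] with x hx; simpa using hx)
  simpa using norm_coeff_zero_lt_of_twoScale hlam hN hβ' hint.comp_neg hsupp' hne'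
    (twoScale_comp_neg heq)
end

section
/- Let λ > 1 be a real number, N ≥ 1 an integer, β_0 < β_1 < ⋯ < β_N real numbers, and c_0, …, c_N ∈ ℂ, and let φ : ℝ → ℂ be a compactly supported L¹ solution of the two-scale difference equation that is not almost everywhere zero. Let μ ≥ 0 and set a = β_0/(λ−1). If there exist δ > 0 and M > 0 such that |φ(x)| ≤ M·|x − a|^μ for almost every x ∈ (a − δ, a + δ), then |c_0| ≤ λ^{−μ}. -/
/-!
The point `a` is the fixed point of `x ↦ λx - β₀`, the leftmost of the maps in the equation.
If `φ` vanishes below `t`, the equation shows that it vanishes below `a + (t - a) / λ`, so by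
compact support `φ = 0` a.e. on `(-∞, a)`. Just to the right of `a` only the first term of the
equation survives: `φ x = c₀ φ (a + λ (x - a))`. Iterating, `‖c₀‖ⁿ ‖φ x‖ = ‖φ (a + (x - a) / λⁿ)‖
≤ M ((x - a) / λⁿ) ^ μ`, which forces `φ = 0` near `a` when `‖c₀‖ λ ^ μ > 1`. Since then
`c₀ ≠ 0`, the equation at `a + (y - a) / λ` pushes the vanishing of `φ` to the right by a fixed
step, so `φ = 0` a.e.
-/

open MeasureTheory Filter Set Topology

lemma ae_comp_mul_add {P : ℝ → Prop} {k : ℝ} (hk : k ≠ 0) (b : ℝ) (h : ∀ᵐ y, P y) :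
    ∀ᵐ x, P (k * x + b) :=
  ((measurePreserving_add_right volume b).quasiMeasurePreserving.comp
    (Measure.quasiMeasurePreserving_smul volume hk)).ae h

lemma ae_comp_mul_sub {P : ℝ → Prop} {k : ℝ} (hk : k ≠ 0) (b : ℝ) (h : ∀ᵐ y, P y) :
    ∀ᵐ x, P (k * x - b) := by
  simpa only [sub_eq_add_neg] using ae_comp_mul_add hk (-b) h

lemma ae_comp_homothety {P : ℝ → Prop} (a : ℝ) {k : ℝ} (hk : k ≠ 0) (h : ∀ᵐ y, P y) :
    ∀ᵐ x, P (a + (x - a) / k) := by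
  filter_upwards [ae_comp_mul_add (inv_ne_zero hk) (a - a / k) h] with x hx
  convert hx using 1
  field_simp
  ring

lemma exists_pos_forall_ne_add_le {ι : Type*} [Finite ι] {β : ι → ℝ} {i₀ : ι}
    (h : ∀ k ≠ i₀, β i₀ < β k) : ∃ g > 0, ∀ k ≠ i₀, β i₀ + g ≤ β k := by
  have hnear : ∀ᶠ g in 𝓝[>] (0 : ℝ), ∀ k, k ≠ i₀ → β i₀ + g ≤ β k := by
    refine eventually_all.2 fun k => ?_
    by_cases hk : k = i₀
    · simp [hk]
    · filter_upwards [nhdsWithin_le_nhds (eventually_lt_nhds (sub_pos.2 (h k hk)))] with g hg _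
      linarith
  exact (hnear.and self_mem_nhdsWithin).exists.imp fun g hg => ⟨hg.2, hg.1⟩

lemma tendsto_div_pow_atTop_nhds_zero {lam : ℝ} (hlam : 1 < lam) (b : ℝ) :
    Tendsto (fun n : ℕ => b / lam ^ n) atTop (𝓝 0) :=
  tendsto_const_nhds.div_atTop (tendsto_pow_atTop_atTop_of_one_lt hlam)

lemma eq_zero_of_pow_mul_le {r A B : ℝ} (hr : 1 < r) (hA : 0 ≤ A)
    (h : ∀ᶠ n : ℕ in atTop, r ^ n * A ≤ B) : A = 0 := by
  by_contra hA0
  have hA' : 0 < A := lt_of_le_of_ne hA (Ne.symm hA0)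
  obtain ⟨n, hn, hlarge⟩ :=
    (h.and ((tendsto_pow_atTop_atTop_of_one_lt hr).eventually_gt_atTop (B / A))).exists
  rw [div_lt_iff₀ hA'] at hlarge
  linarith

def AEVanishesBelow {E : Type*} [Zero E] (φ : ℝ → E) (t : ℝ) : Prop :=
  ∀ᵐ x : ℝ, x < t → φ x = 0

namespace AEVanishesBelow

variable {E : Type*} [Zero E] {φ : ℝ → E} {s t : ℝ}

theorem mono (h : AEVanishesBelow φ t) (hst : s ≤ t) : AEVanishesBelow φ s := by
  filter_upwards [h] with x hx hxs using hx (hxs.trans_le hst)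

theorem of_forall_lt (h : ∀ s < t, AEVanishesBelow φ s) : AEVanishesBelow φ t := by
  have hall : ∀ᵐ x, ∀ n : ℕ, x < t - 1 / (n + 1) → φ x = 0 :=
    ae_all_iff.2 fun n => h _ (sub_lt_self t (by positivity))
  filter_upwards [hall] with x hx hxt
  obtain ⟨n, hn⟩ := exists_nat_one_div_lt (sub_pos.2 hxt)
  exact hx n (by linarith)

theorem of_ae_Ioo (h : AEVanishesBelow φ s) (hIoo : ∀ᵐ x, x ∈ Ioo s t → φ x = 0) :
    AEVanishesBelow φ t := by
  filter_upwards [h, hIoo, Measure.ae_ne volume s] with x hlt hIoo hne hxt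
  rcases hne.lt_or_gt with hxs | hxs
  exacts [hlt hxs, hIoo ⟨hxs, hxt⟩]

theorem of_homothety_step {lam a : ℝ} (hlam : 1 < lam)
    (hstep : ∀ s, AEVanishesBelow φ s → AEVanishesBelow φ (a + (s - a) / lam))
    (ht : AEVanishesBelow φ t) : AEVanishesBelow φ a := by
  have hiter : ∀ n : ℕ, AEVanishesBelow φ (a + (t - a) / lam ^ n) := by
    intro n
    induction n with
    | zero => simpa using ht
    | succ n ih => simpa [pow_succ, div_div] using hstep _ ih
  refine of_forall_lt fun s hs => ?_
  obtain ⟨n, hn⟩ :=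
    ((tendsto_div_pow_atTop_nhds_zero hlam (t - a)).eventually (lt_mem_nhds (sub_neg.2 hs))).exists
  exact (hiter n).mono (sub_lt_iff_lt_add'.1 hn).le

theorem ae_eq_zero_of_step {d : ℝ} (h : AEVanishesBelow φ t) (hd : 0 < d)
    (hstep : ∀ s, t ≤ s → AEVanishesBelow φ s → AEVanishesBelow φ (s + d)) :
    φ =ᵐ[volume] 0 := by
  have hiter : ∀ n : ℕ, AEVanishesBelow φ (t + n * d) := by
    intro n
    induction n with
    | zero => simpa using h
    | succ n ih =>
      simpa [add_mul, add_assoc] using hstep _ (le_add_of_nonneg_right (by positivity)) ih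
  filter_upwards [ae_all_iff.2 hiter] with x hx
  obtain ⟨n, hn⟩ := exists_nat_gt ((x - t) / d)
  exact hx n (by rw [div_lt_iff₀ hd] at hn; linarith)

end AEVanishesBelow

lemma ae_eq_zero_of_selfSimilar_of_norm_le_rpow {ψ : ℝ → ℂ} {q : ℂ} {lam μ a ε δ M : ℝ}
    (hlam : 1 < lam) (hq : lam ^ (-μ) < ‖q‖) (hδ : 0 < δ)
    (hrel : ∀ᵐ x, x ∈ Ioo a (a + ε) → ψ x = q * ψ (a + lam * (x - a)))
    (hbound : ∀ᵐ x, x ∈ Ioo a (a + δ) → ‖ψ x‖ ≤ M * (x - a) ^ μ) :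
    ∀ᵐ x, x ∈ Ioo a (a + ε) → ψ x = 0 := by
  have hlam0 : 0 < lam := by linarith
  have hr : 1 < ‖q‖ * lam ^ μ := by
    rwa [← div_lt_iff₀ (by positivity), one_div, ← Real.rpow_neg hlam0.le]
  have hrel' : ∀ᵐ x, ∀ n : ℕ, a + (x - a) / lam ^ (n + 1) ∈ Ioo a (a + ε) →
      ψ (a + (x - a) / lam ^ (n + 1)) = q * ψ (a + (x - a) / lam ^ n) := by
    refine ae_all_iff.2 fun n => ?_
    filter_upwards [ae_comp_homothety a (pow_ne_zero (n + 1) hlam0.ne') hrel] with x hx hmem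
    rw [hx hmem]
    congr 2
    field_simp
    ring
  have hbound' : ∀ᵐ x, ∀ n : ℕ, a + (x - a) / lam ^ n ∈ Ioo a (a + δ) →
      ‖ψ (a + (x - a) / lam ^ n)‖ ≤ M * ((x - a) / lam ^ n) ^ μ := by
    refine ae_all_iff.2 fun n => ?_
    filter_upwards [ae_comp_homothety a (pow_ne_zero n hlam0.ne') hbound] with x hx hmem
    simpa using hx hmem
  filter_upwards [hrel', hbound'] with x hrel hbound hx
  have hxa : 0 < x - a := sub_pos.2 hx.1
  have hmem : ∀ n : ℕ, a < a + (x - a) / lam ^ n ∧ a + (x - a) / lam ^ n ≤ x := fun n =>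
    ⟨by have := div_pos hxa (pow_pos hlam0 n); linarith,
      by have := div_le_self hxa.le (one_le_pow₀ hlam.le (n := n)); linarith⟩
  have hiter : ∀ n : ℕ, ψ (a + (x - a) / lam ^ n) = q ^ n * ψ x := by
    intro n
    induction n with
    | zero => simp
    | succ n ih =>
      rw [hrel n ⟨(hmem _).1, (hmem _).2.trans_lt hx.2⟩, ih, pow_succ']
      ring
  have hsmall : ∀ᶠ n : ℕ in atTop, (x - a) / lam ^ n < δ :=
    (tendsto_div_pow_atTop_nhds_zero hlam (x - a)).eventually (gt_mem_nhds hδ)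
  refine norm_eq_zero.1 (eq_zero_of_pow_mul_le (B := M * (x - a) ^ μ) hr (norm_nonneg _) ?_)
  filter_upwards [hsmall] with n hn
  have hmemδ : a + (x - a) / lam ^ n ∈ Ioo a (a + δ) := ⟨(hmem n).1, by linarith⟩
  calc (‖q‖ * lam ^ μ) ^ n * ‖ψ x‖
        = (lam ^ n) ^ μ * ‖ψ (a + (x - a) / lam ^ n)‖ := by
        rw [hiter, norm_mul, norm_pow, mul_pow, Real.rpow_pow_comm hlam0.le]
        ring
    _ ≤ (lam ^ n) ^ μ * (M * ((x - a) / lam ^ n) ^ μ) := by gcongr; exact hbound n hmemδ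
    _ = M * (x - a) ^ μ := by
        rw [Real.div_rpow hxa.le (by positivity)]
        field_simp

def IsTwoScaleSolution {ι : Type*} [Fintype ι] (lam : ℝ) (β : ι → ℝ) (c : ι → ℂ)
    (φ : ℝ → ℂ) : Prop :=
  ∀ᵐ x : ℝ, φ x = ∑ k, c k * φ (lam * x - β k)

namespace IsTwoScaleSolution

variable {ι : Type*} [Fintype ι] {lam a g : ℝ} {β : ι → ℝ} {c : ι → ℂ} {φ : ℝ → ℂ}
  {i₀ : ι}

theorem ae_eq_first_term (h : IsTwoScaleSolution lam β c φ) (hlam : lam ≠ 0) {s : ℝ}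
    (hgap : ∀ k ≠ i₀, β i₀ + g ≤ β k) (hs : AEVanishesBelow φ s) :
    ∀ᵐ x, lam * x - β i₀ < s + g → φ x = c i₀ * φ (lam * x - β i₀) := by
  have hterms : ∀ᵐ x, ∀ k, lam * x - β k < s → φ (lam * x - β k) = 0 :=
    ae_all_iff.2 fun k => ae_comp_mul_sub hlam (β k) hs
  filter_upwards [h, hterms] with x hx hterms hlt
  rw [hx, Fintype.sum_eq_single i₀ fun k hk => ?_]
  rw [hterms k (by linarith [hgap k hk]), mul_zero]

theorem aeVanishesBelow_fixedPoint (h : IsTwoScaleSolution lam β c φ) (hlam : 1 < lam)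
    (hmin : ∀ k, β i₀ ≤ β k) (hfix : lam * a - β i₀ = a) {t : ℝ}
    (ht : AEVanishesBelow φ t) : AEVanishesBelow φ a := by
  have hlam0 : 0 < lam := by linarith
  refine ht.of_homothety_step hlam fun s hs => ?_
  filter_upwards [h.ae_eq_first_term hlam0.ne' (g := 0) (fun k _ => by simpa using hmin k) hs,
    ae_comp_mul_sub hlam0.ne' (β i₀) hs] with x hfirst hzero hx
  have hlt : lam * (x - a) < s - a := (lt_div_iff₀' hlam0).1 (by linarith)
  rw [hfirst (by linarith), hzero (by linarith), mul_zero]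

theorem ae_eq_near_fixedPoint (h : IsTwoScaleSolution lam β c φ) (hlam : 0 < lam)
    (hgap : ∀ k ≠ i₀, β i₀ + g ≤ β k) (hfix : lam * a - β i₀ = a)
    (ha : AEVanishesBelow φ a) :
    ∀ᵐ x, x ∈ Ioo a (a + g / lam) → φ x = c i₀ * φ (a + lam * (x - a)) := by
  have hpt : ∀ x, lam * x - β i₀ = a + lam * (x - a) := fun x => by linarith
  filter_upwards [h.ae_eq_first_term hlam.ne' hgap ha] with x hx hxI
  have hlt : lam * (x - a) < g := (lt_div_iff₀' hlam).1 (by linarith [hxI.2])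
  rw [← hpt]
  exact hx (by linarith [hpt x])

theorem aeVanishesBelow_min (h : IsTwoScaleSolution lam β c φ) (hlam : 0 < lam)
    (hgap : ∀ k ≠ i₀, β i₀ + g ≤ β k) (hfix : lam * a - β i₀ = a) (hc : c i₀ ≠ 0)
    {s : ℝ} (hs : AEVanishesBelow φ s) : AEVanishesBelow φ (min (s + g) (a + lam * (s - a))) := by
  filter_upwards [ae_comp_homothety a hlam.ne' (h.ae_eq_first_term hlam.ne' hgap hs),
    ae_comp_homothety a hlam.ne' hs] with y hfirst hzero hy
  have hpre : lam * (a + (y - a) / lam) - β i₀ = y := by field_simp; linarith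
  have hy₁ := hy.trans_le (min_le_left _ _)
  have hy₂ := hy.trans_le (min_le_right _ _)
  have hlt : (y - a) / lam < s - a := (div_lt_iff₀' hlam).2 (by linarith)
  rw [hpre] at hfirst
  -- the equation at `a + (y - a) / lam` reads `0 = c i₀ * φ y`
  have := hfirst (by linarith)
  rw [hzero (by linarith), eq_comm, mul_eq_zero] at this
  exact this.resolve_left hc

theorem ae_eq_zero_of_aeVanishesBelow (h : IsTwoScaleSolution lam β c φ) (hlam : 1 < lam)
    (hgap : ∀ k ≠ i₀, β i₀ + g ≤ β k) (hg : 0 < g) (hfix : lam * a - β i₀ = a)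
    (hc : c i₀ ≠ 0) {ε : ℝ} (hε : 0 < ε) (haε : AEVanishesBelow φ (a + ε)) :
    φ =ᵐ[volume] 0 := by
  refine haε.ae_eq_zero_of_step (d := min g ((lam - 1) * ε))
    (lt_min hg (mul_pos (by linarith) hε)) fun s hs hvs => ?_
  refine (h.aeVanishesBelow_min (by linarith) hgap hfix hc hvs).mono (le_min ?_ ?_)
  · linarith [min_le_left g ((lam - 1) * ε)]
  · have : (lam - 1) * ε ≤ (lam - 1) * (s - a) := by gcongr; linarith
    linarith [min_le_right g ((lam - 1) * ε)]

end IsTwoScaleSolution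

theorem two_scale_first_coeff_le_general (lam : ℝ) (hlam : 1 < lam) (N : ℕ)
    (β : Fin (N + 1) → ℝ) (hβ : StrictMono β) (c : Fin (N + 1) → ℂ)
    (φ : ℝ → ℂ)
    (hsupp : ∃ R : ℝ, ∀ᵐ x : ℝ, R < |x| → φ x = 0)
    (hne : ¬ φ =ᵐ[volume] 0)
    (heq : ∀ᵐ x : ℝ, φ x = ∑ k : Fin (N + 1), c k * φ (lam * x - β k))
    (μ : ℝ) (a : ℝ) (ha : a = β 0 / (lam - 1))
    (hbound : ∃ δ > (0 : ℝ), ∃ M > (0 : ℝ),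
      ∀ᵐ x : ℝ, x ∈ Set.Ioo (a - δ) (a + δ) → ‖φ x‖ ≤ M * |x - a| ^ μ) :
    ‖c 0‖ ≤ lam ^ (-μ) := by
  by_contra! hc
  have hsol : IsTwoScaleSolution lam β c φ := heq
  have hc0 : c 0 ≠ 0 := norm_pos_iff.1 ((Real.rpow_nonneg (by linarith) _).trans_lt hc)
  have hfix : lam * a - β 0 = a := by
    rw [ha]
    field_simp [(sub_pos.2 hlam).ne']
    ring
  obtain ⟨g, hg, hgap⟩ :=
    exists_pos_forall_ne_add_le fun k hk => hβ (Fin.pos_iff_ne_zero.2 hk)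
  obtain ⟨R, hR⟩ := hsupp
  obtain ⟨δ, hδ, M, -, hM⟩ := hbound
  have hbelow : AEVanishesBelow φ a := by
    refine hsol.aeVanishesBelow_fixedPoint hlam (fun k => hβ.monotone (Fin.zero_le k)) hfix
      (t := -R) ?_
    filter_upwards [hR] with x hx hxR using hx (by rw [lt_abs]; right; linarith)
  have hnear : AEVanishesBelow φ (a + g / lam) := by
    refine hbelow.of_ae_Ioo (ae_eq_zero_of_selfSimilar_of_norm_le_rpow (M := M) hlam hc hδ
      (hsol.ae_eq_near_fixedPoint (by linarith) hgap hfix hbelow) ?_)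
    filter_upwards [hM] with x hx hxI
    rw [← abs_of_pos (sub_pos.2 hxI.1)]
    exact hx ⟨by linarith [hxI.1], hxI.2⟩
  exact hne (hsol.ae_eq_zero_of_aeVanishesBelow hlam hgap hg hfix hc0
    (div_pos hg (by linarith)) hnear)

/-- If `φ` is a compactly supported `L¹` solution, not a.e. zero, of the two-scale
difference equation, `μ ≥ 0`, `a = β 0 / (λ - 1)`, and `|φ(x)| ≤ M |x - a|^μ` a.e. near `a`,
then `|c 0| ≤ λ^(-μ)`. -/
theorem two_scale_first_coeff_le (lam : ℝ) (hlam : 1 < lam) (N : ℕ) (hN : 1 ≤ N)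
    (β : Fin (N + 1) → ℝ) (hβ : StrictMono β) (c : Fin (N + 1) → ℂ)
    (φ : ℝ → ℂ) (hint : Integrable φ)
    (hsupp : ∃ R : ℝ, ∀ᵐ x : ℝ, R < |x| → φ x = 0)
    (hne : ¬ φ =ᵐ[volume] 0)
    (heq : ∀ᵐ x : ℝ, φ x = ∑ k : Fin (N + 1), c k * φ (lam * x - β k))
    (μ : ℝ) (hμ : 0 ≤ μ) (a : ℝ) (ha : a = β 0 / (lam - 1))
    (hbound : ∃ δ > (0 : ℝ), ∃ M > (0 : ℝ),
      ∀ᵐ x : ℝ, x ∈ Set.Ioo (a - δ) (a + δ) → ‖φ x‖ ≤ M * |x - a| ^ μ) :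
    ‖c 0‖ ≤ lam ^ (-μ) :=
  two_scale_first_coeff_le_general lam hlam N β hβ c φ hsupp hne heq μ a ha hbound
end

section
/- Let λ > 1 be a real number, N ≥ 1 an integer, β_0 < β_1 < ⋯ < β_N real numbers, and c_0, …, c_N ∈ ℂ, and let φ : ℝ → ℂ be a compactly supported L¹ solution of the two-scale difference equation that is not almost everywhere zero. Let μ ≥ 0 and set a = β_N/(λ−1). If there exist δ > 0 and M > 0 such that |φ(x)| ≤ M·|x − a|^μ for almost every x ∈ (a − δ, a + δ), then |c_N| ≤ λ^{−μ}. -/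
/-!
Let `b` be the essential right end of the support of `φ`. Beyond `b` the right-hand side of the
equation can only be nonzero through its last term, which forces `b = β N / (λ - 1) = a`, the fixed
point of `x ↦ λ x - β N`, as soon as `c N ≠ 0`. Just left of `a` the equation then reads
`φ x = c N * φ (λ x - β N)`, so `F ε = ∫_{a-ε}^a |φ|` satisfies `F (ε / λ) = |c N| / λ * F ε`,
whereas the Hölder-type bound gives `F ε ≤ M ε ^ (μ + 1)`. Since `F > 0` on a left neighbourhood
of `a`, iterating `ε ↦ ε / λ` yields `|c N| λ ^ μ ≤ 1`.
-/

open MeasureTheory Filter Set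

theorem ae_comp_affine_iff {p : ℝ → Prop} {l : ℝ} (hl : l ≠ 0) (b : ℝ) :
    (∀ᵐ x : ℝ, p (l * x - b)) ↔ ∀ᵐ y : ℝ, p y := by
  have hpre : volume ((fun x => l * x - b) ⁻¹' {y | ¬ p y})
      = ENNReal.ofReal |l⁻¹| * volume {y | ¬ p y} := by
    rw [show (fun x => l * x - b) ⁻¹' {y | ¬ p y} = (l * ·) ⁻¹' ((· + -b) ⁻¹' {y | ¬ p y}) by
      ext; simp [sub_eq_add_neg], Real.volume_preimage_mul_left hl, measure_preimage_add_right]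
  simp only [ae_iff]
  change volume ((fun x => l * x - b) ⁻¹' {y | ¬ p y}) = 0 ↔ _
  rw [hpre, mul_eq_zero, ENNReal.ofReal_eq_zero, abs_nonpos_iff, inv_eq_zero]
  exact or_iff_right hl

section VanishesAbove

variable {E : Type*} [Zero E]

def VanishesAbove (f : ℝ → E) (r : ℝ) : Prop := ∀ᵐ x : ℝ, r < x → f x = 0

variable {f : ℝ → E}

theorem VanishesAbove.mono {r s : ℝ} (h : VanishesAbove f r) (hrs : r ≤ s) :
    VanishesAbove f s := by
  filter_upwards [h] with x hx hsx using hx (hrs.trans_lt hsx)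

theorem bddBelow_setOf_vanishesAbove (hf : ¬ f =ᵐ[volume] 0) :
    BddBelow {r | VanishesAbove f r} := by
  by_contra hbdd
  apply hf
  have hall : ∀ n : ℕ, VanishesAbove f (-n) := fun n => by
    obtain ⟨r, hr, hrn⟩ := not_bddBelow_iff.mp hbdd (-n)
    exact VanishesAbove.mono hr hrn.le
  filter_upwards [ae_all_iff.mpr hall] with x hx
  obtain ⟨n, hn⟩ := exists_nat_gt (-x)
  exact hx n (by linarith)

theorem exists_isLeast_vanishesAbove {R : ℝ} (hR : VanishesAbove f R)
    (hf : ¬ f =ᵐ[volume] 0) : ∃ b, IsLeast {r | VanishesAbove f r} b := by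
  have hbdd := bddBelow_setOf_vanishesAbove hf
  obtain ⟨u, -, hu, huS⟩ := exists_seq_tendsto_sInf ⟨R, hR⟩ hbdd
  refine ⟨_, ?_, fun r hr => csInf_le hbdd hr⟩
  filter_upwards [ae_all_iff.mpr huS] with x hx hbx
  obtain ⟨n, hn⟩ := (hu.eventually (gt_mem_nhds hbx)).exists
  exact hx n hn

end VanishesAbove

section TwoScale

variable {lam : ℝ} {N : ℕ} {β : Fin (N + 1) → ℝ} {c : Fin (N + 1) → ℂ} {φ : ℝ → ℂ} {g r : ℝ}

theorem exists_pos_add_le_last (hβ : StrictMono β) :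
    ∃ g > 0, ∀ k : Fin N, β k.castSucc + g ≤ β (Fin.last N) := by
  cases N with
  | zero => exact ⟨1, one_pos, fun k => k.elim0⟩
  | succ n =>
    refine ⟨β (Fin.last (n + 1)) - β (Fin.last n).castSucc,
      sub_pos.2 (hβ (Fin.castSucc_lt_last _)), fun k => ?_⟩
    have := hβ.monotone (Fin.castSucc_le_castSucc_iff.2 (Fin.le_last k))
    linarith

variable (heq : ∀ᵐ x : ℝ, φ x = ∑ k : Fin (N + 1), c k * φ (lam * x - β k))
  (hg : ∀ k : Fin N, β k.castSucc + g ≤ β (Fin.last N))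
include heq hg

theorem ae_eq_lastCoeff_mul (hlam : lam ≠ 0) (hr : VanishesAbove φ r) :
    ∀ᵐ x : ℝ, r - g < lam * x - β (Fin.last N) →
      φ x = c (Fin.last N) * φ (lam * x - β (Fin.last N)) := by
  have hpull : ∀ᵐ x : ℝ, ∀ k : Fin N,
      r < lam * x - β k.castSucc → φ (lam * x - β k.castSucc) = 0 :=
    ae_all_iff.2 fun k => (ae_comp_affine_iff hlam _).2 hr
  filter_upwards [heq, hpull] with x hx hk hgx
  rw [hx, Fin.sum_univ_castSucc, Finset.sum_eq_zero fun k _ => ?_, zero_add]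
  rw [hk k (by linarith [hg k]), mul_zero]

theorem VanishesAbove.add_last_div (hlam : 0 < lam) (hg0 : 0 ≤ g) (hr : VanishesAbove φ r) :
    VanishesAbove φ ((r + β (Fin.last N)) / lam) := by
  filter_upwards [ae_eq_lastCoeff_mul heq hg hlam.ne' hr,
    (ae_comp_affine_iff hlam.ne' (β (Fin.last N))).2 hr] with x hx hlast hrx
  rw [div_lt_iff₀ hlam] at hrx
  have hr' : r < lam * x - β (Fin.last N) := by linarith
  rw [hx (by linarith), hlast hr', mul_zero]

theorem VanishesAbove.max_mul_sub_last (hlam : 0 < lam) (hc : c (Fin.last N) ≠ 0)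
    (hr : VanishesAbove φ r) : VanishesAbove φ (max (lam * r - β (Fin.last N)) (r - g)) := by
  refine (ae_comp_affine_iff hlam.ne' (β (Fin.last N))).1 ?_
  filter_upwards [ae_eq_lastCoeff_mul heq hg hlam.ne' hr, hr] with x hx hrx hs
  rw [max_lt_iff] at hs
  have hxr : r < x := lt_of_mul_lt_mul_left (by linarith [hs.1]) hlam.le
  exact (mul_eq_zero.1 ((hx hs.2).symm.trans (hrx hxr))).resolve_left hc

theorem eq_div_of_isLeast_vanishesAbove (hlam : 1 < lam) (hg0 : 0 < g) (hc : c (Fin.last N) ≠ 0)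
    {b : ℝ} (hb : IsLeast {r | VanishesAbove φ r} b) : b = β (Fin.last N) / (lam - 1) := by
  have hlam0 : 0 < lam := by linarith
  have h1 : b ≤ (b + β (Fin.last N)) / lam := hb.2 (hb.1.add_last_div heq hg hlam0 hg0.le)
  have h2 : b ≤ max (lam * b - β (Fin.last N)) (b - g) :=
    hb.2 (hb.1.max_mul_sub_last heq hg hlam0 hc)
  have h3 : b ≤ lam * b - β (Fin.last N) :=
    (le_max_iff.1 h2).resolve_right (by linarith)
  rw [le_div_iff₀ hlam0] at h1
  rw [eq_div_iff (by linarith)]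
  linarith

theorem ae_eq_lastCoeff_mul_of_mem_Ioo (hlam : 0 < lam) {a ε : ℝ} (ha : VanishesAbove φ a)
    (hfix : lam * a - β (Fin.last N) = a) (hε : ε ≤ g) :
    ∀ᵐ x : ℝ, x ∈ Ioo (a - ε / lam) a →
      φ x = c (Fin.last N) * φ (lam * x - β (Fin.last N)) := by
  filter_upwards [ae_eq_lastCoeff_mul heq hg hlam.ne' ha] with x hx hmem
  refine hx ?_
  have := mul_lt_mul_of_pos_left hmem.1 hlam
  rw [mul_sub, mul_div_cancel₀ _ hlam.ne'] at this
  linarith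

end TwoScale

section LocalIntegral

variable {E : Type*} [NormedAddCommGroup E] {f : ℝ → E} {a ε : ℝ}

theorem intervalIntegral_norm_pos (hf : IntervalIntegrable f volume (a - ε) a)
    (ha : VanishesAbove f a) (hε : ¬ VanishesAbove f (a - ε)) :
    0 < ∫ x in (a - ε)..a, ‖f x‖ := by
  have hle : a - ε ≤ a := le_of_not_ge fun h => hε (ha.mono h)
  refine (intervalIntegral.integral_nonneg hle fun _ _ => norm_nonneg _).lt_of_ne fun h0 => hε ?_
  have h := (intervalIntegral.integral_eq_zero_iff_of_le_of_nonneg_ae hle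
    (ae_of_all _ fun _ => norm_nonneg _) hf.norm).1 h0.symm
  rw [EventuallyEq, ae_restrict_iff' measurableSet_Ioc] at h
  filter_upwards [h, ha] with x hx hax hx'
  rcases le_or_gt x a with hxa | hxa
  · exact norm_eq_zero.1 (hx ⟨hx', hxa⟩)
  · exact hax hxa

theorem intervalIntegral_norm_le_of_le_rpow {δ M μ : ℝ} (hμ : 0 ≤ μ) (hM : 0 ≤ M)
    (hbound : ∀ᵐ x : ℝ, x ∈ Ioo (a - δ) (a + δ) → ‖f x‖ ≤ M * |x - a| ^ μ)
    (hε : 0 < ε) (hεδ : ε ≤ δ) :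
    ∫ x in (a - ε)..a, ‖f x‖ ≤ M * ε ^ μ * ε := by
  have hC : ∀ᵐ x : ℝ, x ∈ uIoc (a - ε) a → ‖‖f x‖‖ ≤ M * ε ^ μ := by
    filter_upwards [hbound] with x hx hmem
    rw [uIoc_of_le (by linarith)] at hmem
    have hxa : |x - a| ≤ ε := by
      rw [abs_sub_comm, abs_of_nonneg (by linarith [hmem.2])]
      linarith [hmem.1]
    rw [norm_norm]
    calc ‖f x‖ ≤ M * |x - a| ^ μ := hx ⟨by linarith [hmem.1], by linarith [hmem.2]⟩
      _ ≤ M * ε ^ μ := by gcongr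
  calc ∫ x in (a - ε)..a, ‖f x‖
      ≤ ‖∫ x in (a - ε)..a, ‖f x‖‖ := le_abs_self _
    _ ≤ M * ε ^ μ * |a - (a - ε)| := intervalIntegral.norm_integral_le_of_norm_le_const_ae hC
    _ = M * ε ^ μ * ε := by rw [sub_sub_cancel, abs_of_pos hε]

end LocalIntegral

theorem intervalIntegral_norm_div_eq {𝕜 : Type*} [NormedDivisionRing 𝕜] {f : ℝ → 𝕜}
    {a b lam ε : ℝ} {c : 𝕜} (hlam : 0 < lam) (hε : 0 ≤ ε) (hfix : lam * a - b = a)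
    (hf : ∀ᵐ x : ℝ, x ∈ Ioo (a - ε / lam) a → f x = c * f (lam * x - b)) :
    ∫ x in (a - ε / lam)..a, ‖f x‖ = ‖c‖ / lam * ∫ x in (a - ε)..a, ‖f x‖ := by
  have hends : lam * (a - ε / lam) - b = a - ε := by
    field_simp
    linarith
  calc ∫ x in (a - ε / lam)..a, ‖f x‖
      = ∫ x in (a - ε / lam)..a, ‖c‖ * ‖f (lam * x - b)‖ := by
        refine intervalIntegral.integral_congr_ae ?_
        filter_upwards [hf, volume.ae_ne a] with x hx hxa hmem
        rw [uIoc_of_le (by linarith [div_nonneg hε hlam.le])] at hmem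
        rw [hx ⟨hmem.1, lt_of_le_of_ne hmem.2 hxa⟩, norm_mul]
    _ = ‖c‖ / lam * ∫ x in (a - ε)..a, ‖f x‖ := by
        rw [intervalIntegral.integral_const_mul,
          intervalIntegral.integral_comp_mul_sub (fun y => ‖f y‖) hlam.ne', hends, hfix,
          smul_eq_mul, div_eq_mul_inv, mul_assoc]

theorem apply_div_pow_eq_pow_mul {F : ℝ → ℝ} {lam s ε₀ : ℝ} (hlam : 1 ≤ lam) (hε₀ : 0 < ε₀)
    (hF : ∀ ε ∈ Ioc 0 ε₀, F (ε / lam) = s * F ε) (n : ℕ) :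
    F (ε₀ / lam ^ n) = s ^ n * F ε₀ := by
  induction n with
  | zero => simp
  | succ n ih =>
    have hmem : ε₀ / lam ^ n ∈ Ioc 0 ε₀ :=
      ⟨by positivity, div_le_self hε₀.le (one_le_pow₀ hlam)⟩
    rw [pow_succ, ← div_div, hF _ hmem, ih, pow_succ']
    ring

theorem le_of_forall_pow_mul_le {s t u v : ℝ} (hu : 0 < u) (ht : 0 < t)
    (h : ∀ n : ℕ, s ^ n * u ≤ t ^ n * v) : s ≤ t := by
  by_contra! hts
  obtain ⟨n, hn⟩ := pow_unbounded_of_one_lt (v / u) ((one_lt_div ht).2 hts)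
  rw [div_pow, div_lt_div_iff₀ hu (by positivity)] at hn
  linarith [h n]

theorem le_of_scaling_of_le {F B : ℝ → ℝ} {lam s t ε₀ : ℝ} (hlam : 1 ≤ lam) (hε₀ : 0 < ε₀)
    (ht : 0 < t) (hF : ∀ ε ∈ Ioc 0 ε₀, F (ε / lam) = s * F ε)
    (hB : ∀ ε ∈ Ioc 0 ε₀, B (ε / lam) = t * B ε) (hFB : ∀ ε ∈ Ioc 0 ε₀, F ε ≤ B ε)
    (hF₀ : 0 < F ε₀) : s ≤ t :=
  le_of_forall_pow_mul_le hF₀ ht fun n => by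
    rw [← apply_div_pow_eq_pow_mul hlam hε₀ hF, ← apply_div_pow_eq_pow_mul hlam hε₀ hB]
    exact hFB _ ⟨by positivity, div_le_self hε₀.le (one_le_pow₀ hlam)⟩

theorem two_scale_last_coeff_le_general (lam : ℝ) (hlam : 1 < lam) (N : ℕ)
    (β : Fin (N + 1) → ℝ) (hβ : StrictMono β) (c : Fin (N + 1) → ℂ)
    (φ : ℝ → ℂ) (hint : Integrable φ)
    (hsupp : ∃ R : ℝ, ∀ᵐ x : ℝ, R < |x| → φ x = 0)
    (hne : ¬ φ =ᵐ[volume] 0)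
    (heq : ∀ᵐ x : ℝ, φ x = ∑ k : Fin (N + 1), c k * φ (lam * x - β k))
    (μ : ℝ) (hμ : 0 ≤ μ) (a : ℝ) (ha : a = β (Fin.last N) / (lam - 1))
    (hbound : ∃ δ > (0 : ℝ), ∃ M > (0 : ℝ),
      ∀ᵐ x : ℝ, x ∈ Set.Ioo (a - δ) (a + δ) → ‖φ x‖ ≤ M * |x - a| ^ μ) :
    ‖c (Fin.last N)‖ ≤ lam ^ (-μ) := by
  obtain ⟨δ, hδ, M, hM, hbd⟩ := hbound
  have hlam0 : 0 < lam := by linarith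
  by_cases hc : c (Fin.last N) = 0
  · rw [hc, norm_zero]
    positivity
  obtain ⟨g, hg0, hg⟩ := exists_pos_add_le_last hβ
  obtain ⟨R, hR⟩ := hsupp
  obtain ⟨b, hb⟩ := exists_isLeast_vanishesAbove (f := φ) (R := R)
    (by filter_upwards [hR] with x hx hRx using hx (hRx.trans_le (le_abs_self x))) hne
  obtain rfl : a = b := ha.trans (eq_div_of_isLeast_vanishesAbove heq hg hlam hg0 hc hb).symm
  have hfix : lam * a - β (Fin.last N) = a := by
    rw [ha]
    field_simp [sub_ne_zero.2 hlam.ne']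
    ring
  have hε₀ : 0 < min δ g := lt_min hδ hg0
  refine (div_le_div_iff_of_pos_right hlam0).1 <| le_of_scaling_of_le
    (F := fun ε => ∫ x in (a - ε)..a, ‖φ x‖) (B := fun ε => M * ε ^ μ * ε) hlam.le
    hε₀ (by positivity) (fun ε hε => ?_) (fun ε hε => ?_) (fun ε hε => ?_) ?_
  · exact intervalIntegral_norm_div_eq hlam0 hε.1.le hfix <|
      ae_eq_lastCoeff_mul_of_mem_Ioo heq hg hlam0 hb.1 hfix (hε.2.trans (min_le_right δ g))
  · simp only [Real.div_rpow hε.1.le hlam0.le, Real.rpow_neg hlam0.le]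
    field_simp
  · exact intervalIntegral_norm_le_of_le_rpow hμ hM.le hbd hε.1 (hε.2.trans (min_le_left δ g))
  · exact intervalIntegral_norm_pos hint.intervalIntegrable hb.1
      fun h => (hb.2 h).not_gt (sub_lt_self a hε₀)

/-- If `φ` is a compactly supported `L¹` solution, not a.e. zero, of the two-scale
difference equation, `μ ≥ 0`, `a = β N / (λ - 1)`, and `|φ(x)| ≤ M |x - a|^μ` a.e. near `a`,
then `|c N| ≤ λ^(-μ)`. -/
theorem two_scale_last_coeff_le (lam : ℝ) (hlam : 1 < lam) (N : ℕ) (hN : 1 ≤ N)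
    (β : Fin (N + 1) → ℝ) (hβ : StrictMono β) (c : Fin (N + 1) → ℂ)
    (φ : ℝ → ℂ) (hint : Integrable φ)
    (hsupp : ∃ R : ℝ, ∀ᵐ x : ℝ, R < |x| → φ x = 0)
    (hne : ¬ φ =ᵐ[volume] 0)
    (heq : ∀ᵐ x : ℝ, φ x = ∑ k : Fin (N + 1), c k * φ (lam * x - β k))
    (μ : ℝ) (hμ : 0 ≤ μ) (a : ℝ) (ha : a = β (Fin.last N) / (lam - 1))
    (hbound : ∃ δ > (0 : ℝ), ∃ M > (0 : ℝ),
      ∀ᵐ x : ℝ, x ∈ Set.Ioo (a - δ) (a + δ) → ‖φ x‖ ≤ M * |x - a| ^ μ) :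
    ‖c (Fin.last N)‖ ≤ lam ^ (-μ) :=
  two_scale_last_coeff_le_general lam hlam N β hβ c φ hint hsupp hne heq μ hμ a ha hbound
end

section
/- Let λ > 1 be a real number, N ≥ 1 an integer, β_0 < β_1 < ⋯ < β_N real numbers, and c_0, …, c_N ∈ ℂ. If φ : ℝ → ℂ is infinitely differentiable with compact support and satisfies φ(x) = Σ_{k=0}^N c_k φ(λx − β_k) for all x ∈ ℝ, then φ is identically zero. In other words, the two-scale difference equation has no solution in C_c^∞(ℝ) \ {0}. -/
open MeasureTheory Filter

/-- Key lemma: a continuous compactly supported solution of a two-scale equation whose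
first nonzero coefficient has norm `> 1` must vanish. -/
lemma two_scale_aux (lam : ℝ) (hlam : 1 < lam) {n : ℕ} (β : Fin n → ℝ) (hβ : StrictMono β)
    (d : Fin n → ℂ) (j : Fin n) (hdj : 1 < ‖d j‖) (hdk : ∀ k, k < j → d k = 0)
    (ψ : ℝ → ℂ) (hcont : Continuous ψ) (hsupp : HasCompactSupport ψ)
    (heq : ∀ x : ℝ, ψ x = ∑ k, d k * ψ (lam * x - β k)) : ψ = 0 := by
  by_contra hne
  have hlam0 : (0:ℝ) < lam := by linarith
  obtain ⟨x₀, hx₀⟩ : ∃ x, ψ x ≠ 0 := by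
    by_contra h; push_neg at h; exact hne (funext h)
  set E : Set ℝ := {x | ψ x ≠ 0} with hE
  have hEne : E.Nonempty := ⟨x₀, hx₀⟩
  have hbdd : BddBelow E := hsupp.bddBelow.mono (subset_tsupport ψ)
  set a := sInf E with ha
  have hlb : ∀ x ∈ E, a ≤ x := fun x hx => csInf_le hbdd hx
  have hzeroa : ψ a = 0 := by
    by_contra h
    have hxE : a ∈ E := h
    have hopen : IsOpen E := IsOpen.preimage hcont isOpen_compl_singleton
    obtain ⟨ε, hε, hball⟩ := Metric.isOpen_iff.mp hopen a hxE
    have hmem : a - ε/2 ∈ E := by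
      apply hball
      rw [Metric.mem_ball, Real.dist_eq]
      rw [abs_of_nonpos (by linarith)]
      linarith
    have := hlb _ hmem
    linarith
  have hzero : ∀ x, x ≤ a → ψ x = 0 := by
    intro x hx
    rcases eq_or_lt_of_le hx with h | h
    · rw [h]; exact hzeroa
    · by_contra hh
      exact absurd (hlb x hh) (not_le.mpr h)
  have hlt : ∀ ε : ℝ, 0 < ε → ∃ x ∈ E, x < a + ε := by
    intro ε hε
    by_contra h; push_neg at h
    have : a + ε ≤ a := le_csInf hEne h
    linarith
  have hdj0 : d j ≠ 0 := by
    intro h; rw [h, norm_zero] at hdj; linarith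
  have key : ∀ x : ℝ, (∀ k, j < k → ψ (lam * x - β k) = 0) →
      ψ x = d j * ψ (lam * x - β j) := by
    intro x hx
    rw [heq x]
    apply Finset.sum_eq_single_of_mem j (Finset.mem_univ j)
    intro k _ hkj
    rcases lt_or_gt_of_ne hkj with h | h
    · rw [hdk k h, zero_mul]
    · rw [hx k h, mul_zero]
  rcases lt_trichotomy (lam * a - β j) a with hcase | hcase | hcase
  · -- lam * a - β j < a : everything vanishes just above a
    set ε := (a - (lam * a - β j)) / lam with hεdef
    have hε : 0 < ε := div_pos (by linarith) hlam0
    obtain ⟨x, hxE, hxlt⟩ := hlt ε hε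
    have hεeq : lam * ε = a - (lam * a - β j) := by
      rw [hεdef]; field_simp
    have hargj : lam * x - β j < a := by nlinarith
    have h1 : ψ x = d j * ψ (lam * x - β j) := by
      apply key
      intro k hk
      have hβk := hβ hk
      exact hzero _ (by linarith)
    rw [hzero _ hargj.le, mul_zero] at h1
    exact hxE h1
  · -- lam * a - β j = a : scaling argument near the fixed point a
    have hune : (Finset.univ : Finset (Fin n)).Nonempty := ⟨j, Finset.mem_univ j⟩
    set g : Fin n → ℝ := fun k => if j < k then (β k - β j) / lam else 1 with hg
    set δ₀ := Finset.univ.inf' hune g with hδ₀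
    have hδpos : 0 < δ₀ := by
      rw [hδ₀, Finset.lt_inf'_iff]
      intro k _
      rw [hg]
      dsimp only
      split_ifs with h
      · exact div_pos (by linarith [hβ h]) hlam0
      · norm_num
    have hδk : ∀ k, j < k → lam * δ₀ ≤ β k - β j := by
      intro k hk
      have h1 : δ₀ ≤ g k := Finset.inf'_le g (Finset.mem_univ k)
      rw [hg] at h1; dsimp only at h1; rw [if_pos hk] at h1
      calc lam * δ₀ ≤ lam * ((β k - β j) / lam) := by
            exact mul_le_mul_of_nonneg_left h1 hlam0.le
        _ = β k - β j := by field_simp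
    have claimA : ∀ t : ℝ, 0 ≤ t → t ≤ δ₀ → ψ (a + t) = d j * ψ (a + lam * t) := by
      intro t ht1 ht2
      have hexp : lam * (a + t) = lam * a + lam * t := by ring
      have h1 : ψ (a + t) = d j * ψ (lam * (a + t) - β j) := by
        apply key
        intro k hk
        apply hzero
        have h2 := hδk k hk
        have h3 : lam * t ≤ lam * δ₀ := mul_le_mul_of_nonneg_left ht2 hlam0.le
        linarith
      rw [h1]
      congr 2
      linarith
    have claimB : ∀ t : ℝ, 0 ≤ t → t ≤ δ₀ → ∀ m : ℕ,
        ψ (a + t / lam ^ m) = d j ^ m * ψ (a + t) := by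
      intro t ht1 ht2 m
      induction m with
      | zero => simp
      | succ m ih =>
        have hpow : (0:ℝ) < lam ^ (m+1) := by positivity
        have hlam1 : (1:ℝ) ≤ lam ^ (m+1) := one_le_pow₀ hlam.le
        have ht' : t / lam ^ (m+1) ≤ δ₀ := le_trans (div_le_self ht1 hlam1) ht2
        have ht'0 : 0 ≤ t / lam ^ (m+1) := div_nonneg ht1 hpow.le
        have hA := claimA _ ht'0 ht'
        have harg : a + lam * (t / lam ^ (m+1)) = a + t / lam ^ m := by
          field_simp
          ring
        rw [harg] at hA
        rw [hA, ih]
        ring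
    obtain ⟨M, hM⟩ := hsupp.exists_bound_of_continuous hcont
    have hclaim : ∀ z, a < z → z ≤ a + δ₀ → ψ z = 0 := by
      intro z hz1 hz2
      by_contra h
      have hψz : 0 < ‖ψ z‖ := norm_pos_iff.mpr h
      set t := z - a with htdef
      have hB := claimB t (by linarith) (by linarith)
      have haz : a + t = z := by ring
      have hnorm : ∀ m : ℕ, ‖d j‖ ^ m * ‖ψ z‖ ≤ M := by
        intro m
        have h1 := hB m
        rw [haz] at h1
        calc ‖d j‖ ^ m * ‖ψ z‖ = ‖d j ^ m * ψ z‖ := by rw [norm_mul, norm_pow]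
          _ = ‖ψ (a + t / lam ^ m)‖ := by rw [← h1]
          _ ≤ M := hM _
      obtain ⟨m, hm⟩ := pow_unbounded_of_one_lt (M / ‖ψ z‖) hdj
      rw [div_lt_iff₀ hψz] at hm
      have := hnorm m
      linarith
    obtain ⟨x, hxE, hxlt⟩ := hlt δ₀ hδpos
    have hx0 : ψ x = 0 := by
      rcases le_or_gt x a with h | h
      · exact hzero x h
      · exact hclaim x h (by linarith)
    exact hxE hx0
  · -- a < lam * a - β j : pull back and translate down
    set η := lam * a - β j - a with hη
    have hηpos : 0 < η := by rw [hη]; linarith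
    have hune : (Finset.univ : Finset (Fin n)).Nonempty := ⟨j, Finset.mem_univ j⟩
    set f : Fin n → ℝ := fun k => if j < k then min η (β k - β j) else η with hf
    set ε₀ := Finset.univ.inf' hune f with hε₀
    have hε₀pos : 0 < ε₀ := by
      rw [hε₀, Finset.lt_inf'_iff]
      intro k _
      rw [hf]; dsimp only
      split_ifs with h
      · exact lt_min hηpos (by linarith [hβ h])
      · exact hηpos
    have hε₀η : ε₀ ≤ η := by
      have h1 : ε₀ ≤ f j := Finset.inf'_le f (Finset.mem_univ j)
      rw [hf] at h1; dsimp only at h1; rw [if_neg (lt_irrefl j)] at h1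
      exact h1
    have hε₀k : ∀ k, j < k → ε₀ ≤ β k - β j := by
      intro k hk
      have h1 : ε₀ ≤ f k := Finset.inf'_le f (Finset.mem_univ k)
      rw [hf] at h1; dsimp only at h1; rw [if_pos hk] at h1
      exact h1.trans (min_le_right _ _)
    have hclaim : ∀ z, a < z → z ≤ a + ε₀ → ψ z = 0 := by
      intro z hz1 hz2
      set x := (z + β j) / lam with hx
      have hxval : lam * x - β j = z := by
        rw [hx]; field_simp; ring
      have hxa : x ≤ a := by
        rw [hx, div_le_iff₀ hlam0]
        have : z + β j ≤ a + η + β j := by linarith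
        rw [hη] at this
        linarith
      have h1 : ψ x = d j * ψ (lam * x - β j) := by
        apply key
        intro k hk
        apply hzero
        have h2 := hε₀k k hk
        have h3 : lam * x = z + β j := by linarith [hxval]
        linarith
      rw [hzero x hxa, hxval] at h1
      exact ((mul_eq_zero.mp h1.symm).resolve_left hdj0)
    obtain ⟨x, hxE, hxlt⟩ := hlt ε₀ hε₀pos
    have hx0 : ψ x = 0 := by
      rcases le_or_gt x a with h | h
      · exact hzero x h
      · exact hclaim x h (by linarith)
    exact hxE hx0

/-- The two-scale difference equation has no nonzero solution in `C_c^∞(ℝ)`. -/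
theorem two_scale_no_smooth_compactly_supported_solution (lam : ℝ) (hlam : 1 < lam)
    (N : ℕ) (hN : 1 ≤ N) (β : Fin (N + 1) → ℝ) (hβ : StrictMono β) (c : Fin (N + 1) → ℂ)
    (φ : ℝ → ℂ) (hsmooth : ContDiff ℝ (⊤ : ℕ∞) φ) (hsupp : HasCompactSupport φ)
    (heq : ∀ x : ℝ, φ x = ∑ k : Fin (N + 1), c k * φ (lam * x - β k)) :
    φ = 0 := by
  by_cases hc : ∀ k, c k = 0
  · funext x
    rw [heq x]
    simp [hc]
  · push_neg at hc
    -- j : minimal index with nonzero coefficient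
    have hkey2 : ∃ j : Fin (N+1), c j ≠ 0 ∧ ∀ k, k < j → c k = 0 := by
      obtain ⟨k₀, hk₀⟩ := hc
      have hSne : (Finset.univ.filter (fun k => c k ≠ 0)).Nonempty := ⟨k₀, by simp [hk₀]⟩
      refine ⟨(Finset.univ.filter (fun k => c k ≠ 0)).min' hSne,
        (Finset.mem_filter.mp (Finset.min'_mem _ hSne)).2, ?_⟩
      intro k hk
      by_contra h
      exact absurd (Finset.min'_le _ k (by simp [h])) (not_le.mpr hk)
    obtain ⟨j, hcj, hmin⟩ := hkey2
    have hcjpos : 0 < ‖c j‖ := norm_pos_iff.mpr hcj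
    obtain ⟨n₀, hn₀⟩ := pow_unbounded_of_one_lt (1 / ‖c j‖) hlam
    have hbig : 1 < lam ^ n₀ * ‖c j‖ := by
      rw [div_lt_iff₀ hcjpos] at hn₀
      linarith
    have hlam0 : (0:ℝ) < lam := by linarith
    -- differentiability facts
    have hdiffIter : ∀ m : ℕ, Differentiable ℝ (iteratedDeriv m φ) := by
      intro m
      exact hsmooth.differentiable_iteratedDeriv m (by
        exact_mod_cast lt_of_le_of_lt (le_refl _) (WithTop.coe_lt_top _))
    have hsuppIter : ∀ m : ℕ, HasCompactSupport (iteratedDeriv m φ) := by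
      intro m
      induction m with
      | zero => simpa using hsupp
      | succ m ih => rw [iteratedDeriv_succ]; exact ih.deriv
    -- the iterated derivatives satisfy rescaled two-scale equations
    have heqIter : ∀ m : ℕ, ∀ x : ℝ, iteratedDeriv m φ x =
        ∑ k, ((lam:ℂ) ^ m * c k) * iteratedDeriv m φ (lam * x - β k) := by
      intro m
      induction m with
      | zero => simpa using heq
      | succ m ih =>
        intro x
        have hF : iteratedDeriv m φ =
            fun y => ∑ k, ((lam:ℂ) ^ m * c k) * iteratedDeriv m φ (lam * y - β k) :=
          funext ih
        have hsum : HasDerivAt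
            (fun y => ∑ k, ((lam:ℂ) ^ m * c k) * iteratedDeriv m φ (lam * y - β k))
            (∑ k, ((lam:ℂ) ^ (m+1) * c k) * deriv (iteratedDeriv m φ) (lam * x - β k)) x := by
          refine HasDerivAt.fun_sum fun k _ => ?_
          have h1 : HasDerivAt (fun y : ℝ => lam * y - β k) lam x := by
            simpa using ((hasDerivAt_id x).const_mul lam).sub_const (β k)
          have h2 : HasDerivAt (iteratedDeriv m φ)
              (deriv (iteratedDeriv m φ) (lam * x - β k)) (lam * x - β k) :=
            (hdiffIter m _).hasDerivAt
          have h3 := HasDerivAt.scomp x h2 h1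
          have h4 := h3.const_mul ((lam:ℂ) ^ m * c k)
          refine h4.congr_deriv ?_
          rw [Complex.real_smul]
          push_cast
          ring
        rw [iteratedDeriv_succ]
        have hd := hsum.deriv
        rw [← hF] at hd
        rw [hd]
    -- apply the key lemma to the n₀-th derivative
    have hψ0 : iteratedDeriv n₀ φ = 0 := by
      apply two_scale_aux lam hlam β hβ (fun k => (lam:ℂ) ^ n₀ * c k) j
      · rw [norm_mul, norm_pow, Complex.norm_real, Real.norm_eq_abs, abs_of_pos hlam0]
        exact hbig
      · intro k hk
        rw [hmin k hk, mul_zero]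
      · exact hsmooth.continuous_iteratedDeriv n₀ (by exact_mod_cast le_top)
      · exact hsuppIter n₀
      · exact heqIter n₀
    -- descend: all lower derivatives vanish too
    have hdown : ∀ k : ℕ, iteratedDeriv (k+1) φ = 0 → iteratedDeriv k φ = 0 := by
      intro k hk
      have hd0 : ∀ x, deriv (iteratedDeriv k φ) x = 0 := by
        intro x
        rw [← iteratedDeriv_succ, hk]
        rfl
      have hconst := is_const_of_deriv_eq_zero (hdiffIter k) hd0
      have hcs : HasCompactSupport (iteratedDeriv k φ) := hsuppIter k
      obtain ⟨r, hr⟩ := hcs.isBounded.subset_ball (0:ℝ)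
      have hx₀ : r ∉ tsupport (iteratedDeriv k φ) := by
        intro hmem
        have := hr hmem
        rw [Metric.mem_ball, Real.dist_eq, sub_zero] at this
        exact absurd this (not_lt.mpr (le_abs_self r))
      have h0 : iteratedDeriv k φ r = 0 := image_eq_zero_of_notMem_tsupport hx₀
      funext x
      show iteratedDeriv k φ x = 0
      rw [hconst x r]
      exact h0
    have hall : ∀ m : ℕ, m ≤ n₀ → iteratedDeriv (n₀ - m) φ = 0 := by
      intro m
      induction m with
      | zero => intro _; simpa using hψ0
      | succ m ih =>
        intro hm
        have h1 := ih (Nat.le_of_succ_le hm)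
        have h2 : n₀ - m = (n₀ - (m+1)) + 1 := by omega
        rw [h2] at h1
        exact hdown _ h1
    have := hall n₀ le_rfl
    simpa using this
end

section
/- Let λ > 2 be a real number, β_0 < β_1 real numbers, and c_0, c_1 ∈ ℂ. If φ : ℝ → ℂ is integrable, compactly supported, essentially bounded, and satisfies φ(x) = c_0 φ(λx − β_0) + c_1 φ(λx − β_1) for almost every x ∈ ℝ, then φ is almost everywhere zero. That is, for λ > 2 the two-term two-scale difference equation has no nonzero bounded compactly supported L¹ solution. -/
open MeasureTheory Filter
open scoped ENNReal

/-! The set `S = {φ ≠ 0}` has finite measure because `φ` vanishes outside a bounded set,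
and the equation puts almost every point of `S` into one of the two affine preimages
`{x | λx - βᵢ ∈ S}`, each of measure `|S| / λ`. Hence `|S| ≤ (2 / λ) |S|`, which forces
`|S| = 0` once `λ > 2`. -/

theorem Real.volume_preimage_mul_sub {a : ℝ} (ha : a ≠ 0) (b : ℝ) (s : Set ℝ) :
    volume ((fun x => a * x - b) ⁻¹' s) = ENNReal.ofReal |a⁻¹| * volume s := by
  have : (fun x => a * x - b) ⁻¹' s = (a * ·) ⁻¹' ((· + -b) ⁻¹' s) := by
    ext; simp [sub_eq_add_neg]
  rw [this, Real.volume_preimage_mul_left ha, measure_preimage_add_right]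

theorem ENNReal.eq_zero_of_le_mul_of_lt_one {x c : ℝ≥0∞} (hx : x ≠ ⊤) (hc : c < 1)
    (h : x ≤ c * x) : x = 0 := by
  by_contra hx0
  exact (ENNReal.mul_lt_mul_left hx0 hx hc).not_ge (by rwa [one_mul])

theorem volume_support_ne_top_of_ae_eq_zero_of_lt_abs {M : Type*} [Zero M] {f : ℝ → M} {R : ℝ}
    (hf : ∀ᵐ x, R < |x| → f x = 0) : volume (Function.support f) ≠ ⊤ := by
  refine ne_top_of_le_ne_top (b := volume (Set.Icc (-R) R)) (by simp [Real.volume_Icc])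
    (measure_mono_ae ?_)
  filter_upwards [hf] with x hx hfx
  exact abs_le.1 (not_lt.1 fun hR => hfx (hx hR))

theorem volume_eq_zero_of_ae_subset_iUnion_preimage_affine {ι : Type*} [Fintype ι] {lam : ℝ}
    (hlam : Fintype.card ι < lam) (β : ι → ℝ) {s : Set ℝ} (hs : volume s ≠ ⊤)
    (hcover : s ≤ᵐ[volume] ⋃ i, (fun x => lam * x - β i) ⁻¹' s) : volume s = 0 := by
  have hlam0 : 0 < lam := (Nat.cast_nonneg _).trans_lt hlam
  refine ENNReal.eq_zero_of_le_mul_of_lt_one hs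
    (c := ENNReal.ofReal (Fintype.card ι * lam⁻¹)) ?_ ?_
  · rwa [ENNReal.ofReal_lt_one, mul_inv_lt_iff₀ hlam0, one_mul]
  calc volume s ≤ volume (⋃ i, (fun x => lam * x - β i) ⁻¹' s) := measure_mono_ae hcover
    _ ≤ ∑ i, volume ((fun x => lam * x - β i) ⁻¹' s) := measure_iUnion_fintype_le _ _
    _ = ENNReal.ofReal (Fintype.card ι * lam⁻¹) * volume s := by
      simp [Real.volume_preimage_mul_sub hlam0.ne', abs_of_pos hlam0, ENNReal.ofReal_mul, mul_assoc]

theorem two_term_two_scale_unbounded_of_lam_gt_two_general (lam : ℝ) (hlam : 2 < lam)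
    (β₀ β₁ : ℝ) (c₀ c₁ : ℂ)
    (φ : ℝ → ℂ)
    (hsupp : ∃ R : ℝ, ∀ᵐ x : ℝ, R < |x| → φ x = 0)
    (heq : ∀ᵐ x : ℝ, φ x = c₀ * φ (lam * x - β₀) + c₁ * φ (lam * x - β₁)) :
    φ =ᵐ[volume] 0 := by
  obtain ⟨R, hR⟩ := hsupp
  refine (Measure.measure_support_eq_zero_iff volume).1 <|
    volume_eq_zero_of_ae_subset_iUnion_preimage_affine (β := ![β₀, β₁]) (by simpa using hlam)
      (volume_support_ne_top_of_ae_eq_zero_of_lt_abs hR) ?_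
  filter_upwards [heq] with x hx (hφx : φ x ≠ 0)
  change x ∈ ⋃ i, _
  simp only [Set.mem_iUnion, Set.mem_preimage, Function.mem_support, Fin.exists_fin_two,
    Matrix.cons_val_zero, Matrix.cons_val_one]
  contrapose! hφx
  rw [hx, hφx.1, hφx.2, mul_zero, mul_zero, add_zero]

/-- For `λ > 2`, the two-term two-scale difference equation has no nonzero bounded
compactly supported `L¹` solution. -/
theorem two_term_two_scale_unbounded_of_lam_gt_two (lam : ℝ) (hlam : 2 < lam)
    (β₀ β₁ : ℝ) (hβ : β₀ < β₁) (c₀ c₁ : ℂ)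
    (φ : ℝ → ℂ) (hint : Integrable φ)
    (hsupp : ∃ R : ℝ, ∀ᵐ x : ℝ, R < |x| → φ x = 0)
    (hbdd : MemLp φ ⊤ volume)
    (heq : ∀ᵐ x : ℝ, φ x = c₀ * φ (lam * x - β₀) + c₁ * φ (lam * x - β₁)) :
    φ =ᵐ[volume] 0 :=
  two_term_two_scale_unbounded_of_lam_gt_two_general lam hlam β₀ β₁ c₀ c₁ φ hsupp heq
end

section
/- If φ : ℝ → ℂ is integrable, compactly supported, not almost everywhere zero, satisfies the de Rham equation φ(x) = φ(3x) + (1/3)[φ(3x − 1) + φ(3x + 1)] + (2/3)[φ(3x − 2) + φ(3x + 2)] for almost every x ∈ ℝ, and φ is continuous and Hölder continuous with exponent μ > 0, then μ ≤ −ln(2/3)/ln 3, i.e., 3^μ · (2/3) ≤ 1. -/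
/-!
Let `b = sup (support φ)`. To the right of `(b + 1) / 3` every term of the equation except
`φ (3x - 2)` vanishes, so there `φ x = (2/3) φ (3x - 2)`. Comparing supports through this
relation gives `b = 1`; then `φ 1 = 0`, and iterating towards the fixed point `1` of
`x ↦ 3x - 2` gives `φ (1 - t / 3ⁿ) = (2/3)ⁿ φ (1 - t)` with `φ (1 - t) ≠ 0`. Hölder continuity
at `1` bounds this by `M (t / 3ⁿ)^μ`, so `(3^μ · 2/3)ⁿ` stays bounded.
-/

open MeasureTheory Filter Function Set

noncomputable def deRhamOp (φ : ℝ → ℂ) (x : ℝ) : ℂ :=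
  φ (3 * x) + (1 / 3 : ℂ) * (φ (3 * x - 1) + φ (3 * x + 1))
    + (2 / 3 : ℂ) * (φ (3 * x - 2) + φ (3 * x + 2))

theorem Continuous.deRhamOp {φ : ℝ → ℂ} (hφ : Continuous φ) : Continuous (deRhamOp φ) := by
  unfold _root_.deRhamOp
  fun_prop

theorem bddAbove_support_of_ae_eq_zero_of_lt_abs {φ : ℝ → ℂ} (hφ : Continuous φ) {R : ℝ}
    (h : ∀ᵐ x, R < |x| → φ x = 0) : BddAbove (support φ) := by
  have hU : IsOpen {x : ℝ | R < |x|} := isOpen_lt continuous_const continuous_abs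
  have hzero : EqOn φ 0 {x | R < |x|} :=
    Measure.eqOn_open_of_ae_eq ((ae_restrict_iff' hU.measurableSet).2 h) hU
      hφ.continuousOn continuousOn_const
  exact ⟨R, fun x hx => not_lt.1 fun hRx => hx (hzero (hRx.trans_le (le_abs_self x)))⟩

theorem IsLUB.apply_eq_zero_of_lt {α M : Type*} [Preorder α] [Zero M] {f : α → M} {b y : α}
    (hb : IsLUB (support f) b) (hy : b < y) : f y = 0 :=
  notMem_support.1 fun h => (hb.1 h).not_gt hy

theorem rpow_mul_le_one_of_holder {f : ℝ → ℂ} {M μ a r c p t : ℝ}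
    (hH : ∀ x y, ‖f x - f y‖ ≤ M * |x - y| ^ μ) (ha : 0 < a) (ht : 0 ≤ t) (hc : 0 < c)
    (hdecay : ∀ n : ℕ, r ^ n * c ≤ ‖f (p - t / a ^ n) - f p‖) : a ^ μ * r ≤ 1 := by
  by_contra! h
  obtain ⟨n, hn⟩ := pow_unbounded_of_one_lt (M * t ^ μ / c) h
  refine hn.not_ge ((le_div_iff₀ hc).2 ?_)
  calc (a ^ μ * r) ^ n * c = (a ^ μ) ^ n * (r ^ n * c) := by ring
    _ ≤ (a ^ μ) ^ n * (M * |p - t / a ^ n - p| ^ μ) :=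
      mul_le_mul_of_nonneg_left ((hdecay n).trans (hH _ _)) (by positivity)
    _ = M * t ^ μ := by
      rw [show p - t / a ^ n - p = -(t / a ^ n) by ring, abs_neg, abs_of_nonneg (by positivity),
        Real.div_rpow ht (by positivity), ← Real.rpow_pow_comm ha.le]
      field_simp

section Edge

variable {φ : ℝ → ℂ} {b : ℝ}

theorem deRham_eq_two_thirds_mul (hφ : deRhamOp φ = φ) (hb : IsLUB (support φ) b) {x : ℝ}
    (hx : b < 3 * x - 1) : φ x = 2 / 3 * φ (3 * x - 2) := by
  rw [← congrFun hφ x, deRhamOp, hb.apply_eq_zero_of_lt (by linarith : b < 3 * x),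
    hb.apply_eq_zero_of_lt hx, hb.apply_eq_zero_of_lt (by linarith : b < 3 * x + 1),
    hb.apply_eq_zero_of_lt (by linarith : b < 3 * x + 2)]
  ring

theorem deRham_lub_support_le_one (hφ : deRhamOp φ = φ) (hb : IsLUB (support φ) b) : b ≤ 1 := by
  by_contra! h
  obtain ⟨x, hx, hbx, -⟩ := hb.exists_between (show (b + 2) / 3 < b by linarith)
  refine hx ?_
  rw [deRham_eq_two_thirds_mul hφ hb (by linarith), hb.apply_eq_zero_of_lt (by linarith),
    mul_zero]

theorem one_le_deRham_lub_support (hφ : deRhamOp φ = φ) (hb : IsLUB (support φ) b) :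
    1 ≤ b := by
  by_contra! h
  obtain ⟨y, hy, hby, -⟩ := hb.exists_between (show max (b - 1) (3 * b - 2) < b by
    rw [max_lt_iff]; constructor <;> linarith)
  rw [max_lt_iff] at hby
  have hx : (y + 2) / 3 ∈ support φ := by
    rw [mem_support, deRham_eq_two_thirds_mul hφ hb (by linarith),
      show 3 * ((y + 2) / 3) - 2 = y by ring]
    exact mul_ne_zero (by norm_num) hy
  linarith [hb.1 hx]

theorem deRham_apply_one (hφ : deRhamOp φ = φ) (hb : IsLUB (support φ) 1) : φ 1 = 0 := by
  have h := deRham_eq_two_thirds_mul hφ hb (x := 1) (by norm_num)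
  norm_num at h
  linear_combination 3 * h

theorem deRham_apply_one_sub_div_pow (hφ : deRhamOp φ = φ) (hb : IsLUB (support φ) 1) {t : ℝ}
    (ht₀ : 0 ≤ t) (ht₁ : t < 1) (n : ℕ) : φ (1 - t / 3 ^ n) = (2 / 3) ^ n * φ (1 - t) := by
  induction n with
  | zero => simp
  | succ n ih =>
    have hle : t / 3 ^ n ≤ t := div_le_self ht₀ (one_le_pow₀ (by norm_num))
    have hscale : 3 * (1 - t / 3 ^ (n + 1)) = 3 - t / 3 ^ n := by
      rw [pow_succ]; field_simp
    rw [deRham_eq_two_thirds_mul hφ hb (by linarith),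
      show 3 * (1 - t / 3 ^ (n + 1)) - 2 = 1 - t / 3 ^ n by linarith, ih, pow_succ]
    ring

end Edge

theorem deRham_holder_exponent_bound_general
    (φ : ℝ → ℂ)
    (hsupp : ∃ R : ℝ, ∀ᵐ x : ℝ, R < |x| → φ x = 0)
    (hne : ¬ φ =ᵐ[volume] 0)
    (heq : ∀ᵐ x : ℝ, φ x = φ (3 * x)
      + (1 / 3 : ℂ) * (φ (3 * x - 1) + φ (3 * x + 1))
      + (2 / 3 : ℂ) * (φ (3 * x - 2) + φ (3 * x + 2)))
    (hcont : Continuous φ) (μ : ℝ)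
    (hHolder : ∃ M > (0 : ℝ), ∀ x y : ℝ, ‖φ x - φ y‖ ≤ M * |x - y| ^ μ) :
    (3 : ℝ) ^ μ * (2 / 3) ≤ 1 := by
  obtain ⟨M, -, hH⟩ := hHolder
  obtain ⟨R, hR⟩ := hsupp
  have hφ : deRhamOp φ = φ :=
    (hcont.deRhamOp.ae_eq_iff_eq volume hcont).1 (heq.mono fun _ hx => hx.symm)
  have hsupp_ne : (support φ).Nonempty :=
    support_nonempty_iff.2 fun h => hne (h ▸ EventuallyEq.rfl)
  have hb := isLUB_csSup hsupp_ne (bddAbove_support_of_ae_eq_zero_of_lt_abs hcont hR)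
  rw [le_antisymm (deRham_lub_support_le_one hφ hb) (one_le_deRham_lub_support hφ hb)] at hb
  obtain ⟨x₀, hx₀, hx₀_pos, hx₀_le⟩ := hb.exists_between zero_lt_one
  have hx₀_lt : x₀ < 1 := hx₀_le.lt_of_ne fun h => hx₀ (h ▸ deRham_apply_one hφ hb)
  refine rpow_mul_le_one_of_holder (p := 1) (t := 1 - x₀) hH (by norm_num) (by linarith)
    (norm_pos_iff.2 hx₀) fun n => le_of_eq ?_
  rw [deRham_apply_one_sub_div_pow hφ hb (by linarith) (by linarith), sub_sub_cancel,
    deRham_apply_one hφ hb, sub_zero, norm_mul, norm_pow]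
  norm_num

/-- A continuous, compactly supported, integrable, not a.e. zero solution of the
de Rham equation which is Hölder continuous with exponent `μ > 0` satisfies
`3^μ * (2/3) ≤ 1`, i.e. `μ ≤ -ln(2/3)/ln 3`. -/
theorem deRham_holder_exponent_bound
    (φ : ℝ → ℂ) (hint : Integrable φ)
    (hsupp : ∃ R : ℝ, ∀ᵐ x : ℝ, R < |x| → φ x = 0)
    (hne : ¬ φ =ᵐ[volume] 0)
    (heq : ∀ᵐ x : ℝ, φ x = φ (3 * x)
      + (1 / 3 : ℂ) * (φ (3 * x - 1) + φ (3 * x + 1))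
      + (2 / 3 : ℂ) * (φ (3 * x - 2) + φ (3 * x + 2)))
    (hcont : Continuous φ) (μ : ℝ) (hμ : 0 < μ)
    (hHolder : ∃ M > (0 : ℝ), ∀ x y : ℝ, ‖φ x - φ y‖ ≤ M * |x - y| ^ μ) :
    (3 : ℝ) ^ μ * (2 / 3) ≤ 1 :=
  deRham_holder_exponent_bound_general φ hsupp hne heq hcont μ hHolder
end

section
/- Let φ : ℝ → ℂ be integrable and not almost everywhere zero. Suppose φ has faster than exponential decay, i.e., for every t > 0, e^{tx}φ(x) → 0 as x → ∞ and e^{−tx}φ(x) → 0 as x → −∞, and suppose the support of φ is not compact, i.e., for every R > 0 the restriction of φ to {x : |x| > R} is not almost everywhere zero. Then every finite wavelet system generated by φ is linearly independent. -/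
/-!
If the right tail of `φ` is not a.e. null, take the nonzero coefficient `c j` whose affine map
`x ↦ λ_j x - β_j` is smallest at `+∞` (least `λ`, then largest `β`). Every other map with a
nonzero coefficient exceeds it by some `δ > 0` for large `x`, so integrating `|c_j φ_j| ≤ ∑ |c_k φ_k|`
over `(X, ∞)` gives `m R ≤ q * m (R + δ)` for large `R`, where `m R = ∫_R^∞ |φ|` is the tail mass.
Iterating, `m R ≤ q ^ n * m (R + n δ)`, and the superexponential decay of `m` forces `m R = 0`,
a contradiction. If instead the right tail of `φ` vanishes, the left one cannot, and the same
argument applies to `x ↦ φ (-x)`.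
-/

open MeasureTheory Filter Set Topology

noncomputable def tailMass {E : Type*} [NormedAddCommGroup E] (f : ℝ → E) (R : ℝ) : ℝ :=
  ∫ x in Ioi R, ‖f x‖

section TailMass

variable {E : Type*} [NormedAddCommGroup E] {f : ℝ → E}

lemma tailMass_antitone (hf : Integrable f) : Antitone (tailMass f) := fun _ _ hab =>
  setIntegral_mono_set hf.norm.integrableOn (.of_forall fun _ => norm_nonneg _)
    (Ioi_subset_Ioi hab).eventuallyLE

lemma tailMass_pos (hf : Integrable f) {R : ℝ} (hR : ¬ ∀ᵐ x, R < x → f x = 0) :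
    0 < tailMass f R := by
  refine (setIntegral_nonneg measurableSet_Ioi fun _ _ => norm_nonneg _).lt_of_ne' fun h0 => hR ?_
  have hnorm : (fun x => ‖f x‖) =ᵐ[volume.restrict (Ioi R)] 0 :=
    (integral_eq_zero_iff_of_nonneg_ae (.of_forall fun _ => norm_nonneg _) hf.norm.restrict).mp h0
  filter_upwards [(ae_restrict_iff' measurableSet_Ioi).mp hnorm] with x hx hxR
  simpa using hx hxR

lemma eventually_tailMass_le (hf : Integrable f) {t : ℝ} (ht : 0 < t)
    (hdecay : Tendsto (fun x => Real.exp (t * x) * ‖f x‖) atTop (nhds 0)) :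
    ∀ᶠ R in atTop, tailMass f R ≤ t⁻¹ * Real.exp (-(t * R)) := by
  obtain ⟨M, hM⟩ := eventually_atTop.mp (hdecay.eventually_le_const one_pos)
  filter_upwards [eventually_ge_atTop M] with R hR
  have hexp : ∫ x in Ioi R, Real.exp (-t * x) = t⁻¹ * Real.exp (-(t * R)) := by
    rw [integral_exp_mul_Ioi (neg_lt_zero.mpr ht)]
    field_simp
  rw [tailMass, ← hexp]
  refine setIntegral_mono_on hf.norm.integrableOn
    (integrableOn_exp_mul_Ioi (neg_lt_zero.mpr ht) R) measurableSet_Ioi fun x hx => ?_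
  have hMx := hM x (hR.trans hx.le)
  rwa [neg_mul, Real.exp_neg, ← one_div, le_div_iff₀' (Real.exp_pos _)]

lemma integral_Ioi_comp_mul_sub [NormedSpace ℝ E] (g : ℝ → E) {a : ℝ} (ha : 0 < a) (b X : ℝ) :
    ∫ x in Ioi X, g (a * x - b) = a⁻¹ • ∫ x in Ioi (a * X - b), g x := by
  rw [integral_comp_mul_left_Ioi (fun y => g (y - b)) X ha,
    ← (measurePreserving_sub_right volume b).setIntegral_preimage_emb
      (measurableEmbedding_subRight b) g (Ioi (a * X - b)),
    preimage_sub_const_Ioi, sub_add_cancel]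

lemma tailMass_comp_mul_sub {a : ℝ} (ha : 0 < a) (b X : ℝ) :
    ∫ x in Ioi X, ‖f (a * x - b)‖ = a⁻¹ * tailMass f (a * X - b) :=
  integral_Ioi_comp_mul_sub (fun y => ‖f y‖) ha b X

end TailMass

lemma le_pow_mul_of_le_mul_shift {m : ℝ → ℝ} {q δ R₀ : ℝ} (hq : 0 ≤ q) (hδ : 0 ≤ δ)
    (hstep : ∀ R ≥ R₀, m R ≤ q * m (R + δ)) (n : ℕ) : m R₀ ≤ q ^ n * m (R₀ + n * δ) := by
  induction n with
  | zero => simp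
  | succ n ih =>
    calc m R₀ ≤ q ^ n * m (R₀ + n * δ) := ih
      _ ≤ q ^ n * (q * m (R₀ + n * δ + δ)) :=
        mul_le_mul_of_nonneg_left (hstep _ (le_add_of_nonneg_right (by positivity)))
          (pow_nonneg hq n)
      _ = q ^ (n + 1) * m (R₀ + (n + 1 : ℕ) * δ) := by push_cast; ring_nf

lemma eventually_nonpos_of_le_mul_shift {m : ℝ → ℝ} {q δ : ℝ} (hq : 0 ≤ q) (hδ : 0 < δ)
    (hstep : ∀ᶠ R in atTop, m R ≤ q * m (R + δ))
    (hdecay : ∀ t > 0, ∃ C, ∀ᶠ R in atTop, m R ≤ C * Real.exp (-(t * R))) :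
    ∀ᶠ R in atTop, m R ≤ 0 := by
  obtain ⟨R₀, hR₀⟩ := eventually_atTop.mp hstep
  filter_upwards [eventually_ge_atTop R₀] with R hR
  set t := (q + 1) / δ
  have htδ : t * δ = q + 1 := div_mul_cancel₀ _ hδ.ne'
  set r := q * Real.exp (-(t * δ)) with hr_def
  have hr : r < 1 := by
    rw [hr_def, htδ, Real.exp_neg, ← div_eq_mul_inv, div_lt_one (Real.exp_pos _)]
    linarith [Real.add_one_le_exp (q + 1)]
  obtain ⟨C, hC⟩ := hdecay t (by positivity)
  have hshift : Tendsto (fun n : ℕ => R + n * δ) atTop atTop :=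
    tendsto_atTop_add_const_left _ _ (tendsto_natCast_atTop_atTop.atTop_mul_const hδ)
  have hgeom := (tendsto_pow_atTop_nhds_zero_of_lt_one (by positivity) hr).const_mul
    (C * Real.exp (-(t * R)))
  rw [mul_zero] at hgeom
  refine ge_of_tendsto hgeom ?_
  filter_upwards [hshift.eventually hC] with n hn
  calc m R ≤ q ^ n * m (R + n * δ) :=
        le_pow_mul_of_le_mul_shift hq hδ.le (fun R' hR' => hR₀ R' (hR.trans hR')) n
    _ ≤ q ^ n * (C * Real.exp (-(t * (R + n * δ)))) := mul_le_mul_of_nonneg_left hn (by positivity)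
    _ = C * Real.exp (-(t * R)) * r ^ n := by
      rw [mul_pow, ← Real.exp_nat_mul, show -(t * (R + n * δ)) = -(t * R) + n * -(t * δ) by ring,
        Real.exp_add]
      ring

lemma eventually_add_le_of_toLex_lt {p p' : ℝ × ℝ}
    (h : toLex (p.1, -p.2) < toLex (p'.1, -p'.2)) :
    ∀ᶠ δ in 𝓝[>] 0, ∀ᶠ x in atTop, p.1 * x - p.2 + δ ≤ p'.1 * x - p'.2 := by
  rcases Prod.Lex.toLex_lt_toLex.mp h with hlt | ⟨heq, hlt⟩
  · refine .of_forall fun δ => ?_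
    filter_upwards [(tendsto_id.const_mul_atTop (sub_pos.mpr hlt)).eventually_ge_atTop
      (p'.2 - p.2 + δ)] with x hx
    simp only [id] at hx
    linarith
  · filter_upwards [eventually_nhdsWithin_of_eventually_nhds
      (eventually_le_nhds (show (0 : ℝ) < p.2 - p'.2 by linarith))] with δ hδ
    refine .of_forall fun x => ?_
    simp only at heq
    rw [heq]
    linarith

lemma exists_eventually_add_le_of_injOn {ι : Type*} (s : Finset ι) (hs : s.Nonempty)
    (p : ι → ℝ × ℝ) (hp : InjOn p s) :
    ∃ j ∈ s, ∃ δ > 0, ∀ᶠ x in atTop, ∀ k ∈ s, k ≠ j →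
      (p j).1 * x - (p j).2 + δ ≤ (p k).1 * x - (p k).2 := by
  obtain ⟨j, hj, hmin⟩ := s.exists_min_image (fun k => toLex ((p k).1, -(p k).2)) hs
  have hgap : ∀ k ∈ s, ∀ᶠ δ in 𝓝[>] 0, ∀ᶠ x in atTop, k ≠ j →
      (p j).1 * x - (p j).2 + δ ≤ (p k).1 * x - (p k).2 := by
    intro k hk
    by_cases hkj : k = j
    · exact .of_forall fun _ => .of_forall fun _ h => absurd hkj h
    refine (eventually_add_le_of_toLex_lt ((hmin k hk).lt_of_ne fun h => hkj (hp hk hj ?_))).mono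
      fun δ hδ => hδ.mono fun _ hx _ => hx
    simp only [toLex_inj, Prod.mk.injEq, neg_inj] at h
    exact Prod.ext h.1.symm h.2.symm
  obtain ⟨δ, hδ, hδpos⟩ := ((eventually_all_finset s).2 fun k hk =>
    hgap k hk).and self_mem_nhdsWithin |>.exists
  exact ⟨j, hj, δ, hδpos, (eventually_all_finset s).2 hδ⟩

lemma norm_le_sum_erase_norm_of_sum_eq_zero {ι E : Type*} [DecidableEq ι]
    [NormedAddCommGroup E] {s : Finset ι} {v : ι → E} (h : ∑ k ∈ s, v k = 0) {j : ι}
    (hj : j ∈ s) : ‖v j‖ ≤ ∑ k ∈ s.erase j, ‖v k‖ := by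
  rw [← Finset.add_sum_erase s v hj] at h
  rw [eq_neg_of_add_eq_zero_left h, norm_neg]
  exact norm_sum_le _ _

section AffineSystem

variable {ι : Type*} [Fintype ι] [DecidableEq ι] {φ : ℝ → ℂ} {a b : ι → ℝ} {c : ι → ℂ}

lemma norm_mul_tailMass_le_sum (hφ : Integrable φ) (ha : ∀ k, 0 < a k)
    (hzero : ∀ᵐ x, ∑ k, c k * φ (a k * x - b k) = 0) (j : ι) (X : ℝ) :
    ‖c j‖ * ((a j)⁻¹ * tailMass φ (a j * X - b j)) ≤
      ∑ k ∈ Finset.univ.erase j, ‖c k‖ * ((a k)⁻¹ * tailMass φ (a k * X - b k)) := by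
  have hint : ∀ k, Integrable (fun x => ‖c k‖ * ‖φ (a k * x - b k)‖) := fun k =>
    ((hφ.comp_sub_right (b k)).comp_mul_left' (ha k).ne').norm.const_mul _
  calc ‖c j‖ * ((a j)⁻¹ * tailMass φ (a j * X - b j))
      = ∫ x in Ioi X, ‖c j‖ * ‖φ (a j * x - b j)‖ := by
        rw [integral_const_mul, tailMass_comp_mul_sub (ha j)]
    _ ≤ ∫ x in Ioi X, ∑ k ∈ Finset.univ.erase j, ‖c k‖ * ‖φ (a k * x - b k)‖ := by
        refine integral_mono_ae (hint j).restrict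
          (integrable_finsetSum _ fun k _ => (hint k).restrict) (ae_restrict_of_ae ?_)
        filter_upwards [hzero] with x hx
        simpa only [norm_mul] using norm_le_sum_erase_norm_of_sum_eq_zero hx (Finset.mem_univ j)
    _ = _ := by
        rw [integral_finsetSum _ fun k _ => (hint k).restrict]
        refine Finset.sum_congr rfl fun k _ => ?_
        rw [integral_const_mul, tailMass_comp_mul_sub (ha k)]

lemma eventually_tailMass_le_mul_shift (hφ : Integrable φ) (ha : ∀ k, 0 < a k)
    (hzero : ∀ᵐ x, ∑ k, c k * φ (a k * x - b k) = 0) {j : ι} (hj : c j ≠ 0) {δ : ℝ}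
    (hgap : ∀ᶠ X in atTop, ∀ k, c k ≠ 0 → k ≠ j → a j * X - b j + δ ≤ a k * X - b k) :
    ∃ q ≥ 0, ∀ᶠ R in atTop, tailMass φ R ≤ q * tailMass φ (R + δ) := by
  set K := ∑ k ∈ Finset.univ.erase j, ‖c k‖ * (a k)⁻¹
  have hK : 0 ≤ K := Finset.sum_nonneg fun k _ => mul_nonneg (norm_nonneg _) (inv_pos.mpr (ha k)).le
  have hq : 0 ≤ a j / ‖c j‖ := div_nonneg (ha j).le (norm_nonneg _)
  have hstep : ∀ᶠ X in atTop, ‖c j‖ * ((a j)⁻¹ * tailMass φ (a j * X - b j)) ≤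
      K * tailMass φ (a j * X - b j + δ) := by
    filter_upwards [hgap] with X hX
    refine (norm_mul_tailMass_le_sum hφ ha hzero j X).trans ?_
    rw [Finset.sum_mul]
    refine Finset.sum_le_sum fun k hk => ?_
    by_cases hck : c k = 0
    · simp [hck]
    rw [mul_assoc]
    gcongr
    · exact (inv_pos.mpr (ha k)).le
    · exact tailMass_antitone hφ (hX k hck (Finset.ne_of_mem_erase hk))
  have hinv : Tendsto (fun R => (R + b j) / a j) atTop atTop :=
    (tendsto_atTop_add_const_right _ _ tendsto_id).atTop_div_const (ha j)
  refine ⟨a j / ‖c j‖ * K, mul_nonneg hq hK, ?_⟩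
  filter_upwards [hinv.eventually hstep] with R hR
  rw [mul_div_cancel₀ _ (ha j).ne', add_sub_cancel_right] at hR
  calc tailMass φ R = a j / ‖c j‖ * (‖c j‖ * ((a j)⁻¹ * tailMass φ R)) := by
        field_simp [(ha j).ne', norm_ne_zero_iff.mpr hj]
    _ ≤ a j / ‖c j‖ * (K * tailMass φ (R + δ)) := mul_le_mul_of_nonneg_left hR hq
    _ = a j / ‖c j‖ * K * tailMass φ (R + δ) := by ring

end AffineSystem

theorem coeff_eq_zero_of_ae_sum_eq_zero_of_rightTail {ι : Type*} [Fintype ι] {φ : ℝ → ℂ}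
    (hφ : Integrable φ)
    (hdecay : ∀ t : ℝ, 0 < t → Tendsto (fun x => Real.exp (t * x) * ‖φ x‖) atTop (𝓝 0))
    (htail : ∀ R, ¬ ∀ᵐ x, R < x → φ x = 0) (Λ : ι → ℝ × ℝ) (hpos : ∀ k, 0 < (Λ k).1)
    (hinj : Function.Injective Λ) (c : ι → ℂ)
    (hzero : ∀ᵐ x, ∑ k, c k * φ ((Λ k).1 * x - (Λ k).2) = 0) :
    ∀ k, c k = 0 := by
  classical
  by_contra! ⟨k₀, hk₀⟩
  set T := Finset.univ.filter (c · ≠ 0)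
  obtain ⟨j, hjT, δ, hδ, hgap⟩ := exists_eventually_add_le_of_injOn T
    ⟨k₀, Finset.mem_filter.mpr ⟨Finset.mem_univ _, hk₀⟩⟩ Λ hinj.injOn
  obtain ⟨q, hq, hstep⟩ := eventually_tailMass_le_mul_shift (a := fun k => (Λ k).1) hφ hpos hzero
    (Finset.mem_filter.mp hjT).2
    (hgap.mono fun X hX k hck => hX k (Finset.mem_filter.mpr ⟨Finset.mem_univ _, hck⟩))
  have hmassDecay : ∀ t > 0, ∃ C, ∀ᶠ R in atTop, tailMass φ R ≤ C * Real.exp (-(t * R)) :=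
    fun t ht => ⟨t⁻¹, eventually_tailMass_le hφ ht (hdecay t ht)⟩
  obtain ⟨R, hR⟩ := (eventually_nonpos_of_le_mul_shift hq hδ hstep hmassDecay).exists
  exact (tailMass_pos hφ (htail R)).not_ge hR

lemma forall_not_ae_tail_or_forall_not_ae_tail_neg {E : Type*} [Zero E] {φ : ℝ → E}
    (hsupp : ∀ R : ℝ, 0 < R → ¬ ∀ᵐ x : ℝ, R < |x| → φ x = 0) :
    (∀ R, ¬ ∀ᵐ x, R < x → φ x = 0) ∨ ∀ R, ¬ ∀ᵐ x, R < x → φ (-x) = 0 := by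
  by_contra! ⟨⟨R₁, h₁⟩, ⟨R₂, h₂⟩⟩
  refine hsupp (max |R₁| |R₂| + 1) (by positivity) ?_
  filter_upwards [h₁, (Measure.measurePreserving_neg volume).quasiMeasurePreserving.ae h₂]
    with x hx₁ hx₂ hx
  rcases lt_abs.mp hx with hx | hx
  · exact hx₁ (by linarith [le_abs_self R₁, le_max_left |R₁| |R₂|])
  · simpa using hx₂ (by linarith [le_abs_self R₂, le_max_right |R₁| |R₂|])

theorem fws_linearIndependent_of_superexponential_decay_general
    (φ : ℝ → ℂ) (hint : Integrable φ)
    (hdecay : ∀ t : ℝ, 0 < t →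
      Tendsto (fun x : ℝ => Real.exp (t * x) * ‖φ x‖) atTop (nhds 0) ∧
      Tendsto (fun x : ℝ => Real.exp (-t * x) * ‖φ x‖) atBot (nhds 0))
    (hsupp : ∀ R : ℝ, 0 < R → ¬ (∀ᵐ x : ℝ, R < |x| → φ x = 0))
    (N : ℕ) (Λ : Fin N → ℝ × ℝ)
    (hpos : ∀ k, 0 < (Λ k).1) (hdist : Function.Injective Λ)
    (c : Fin N → ℂ)
    (hzero : ∀ᵐ x : ℝ, ∑ k : Fin N, c k * φ ((Λ k).1 * x - (Λ k).2) = 0) :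
    ∀ k, c k = 0 := by
  rcases forall_not_ae_tail_or_forall_not_ae_tail_neg hsupp with hright | hleft
  · exact coeff_eq_zero_of_ae_sum_eq_zero_of_rightTail hint (fun t ht => (hdecay t ht).1)
      hright Λ hpos hdist c hzero
  refine coeff_eq_zero_of_ae_sum_eq_zero_of_rightTail hint.comp_neg (fun t ht => ?_) hleft
    (fun k => ((Λ k).1, -(Λ k).2)) hpos
    (fun k l h => hdist (Prod.ext (Prod.ext_iff.mp h).1 (neg_injective (Prod.ext_iff.mp h).2)))
    c ?_
  · simpa [Function.comp_def] using (hdecay t ht).2.comp tendsto_neg_atTop_atBot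
  · filter_upwards [(Measure.measurePreserving_neg volume).quasiMeasurePreserving.ae hzero]
      with x hx
    simpa [neg_add_eq_sub] using hx

/-- A finite wavelet system generated by an integrable, not a.e. zero function with faster
than exponential decay and non-compact support is linearly independent. -/
theorem fws_linearIndependent_of_superexponential_decay
    (φ : ℝ → ℂ) (hint : Integrable φ) (hne : ¬ φ =ᵐ[volume] 0)
    (hdecay : ∀ t : ℝ, 0 < t →
      Tendsto (fun x : ℝ => Real.exp (t * x) * ‖φ x‖) atTop (nhds 0) ∧
      Tendsto (fun x : ℝ => Real.exp (-t * x) * ‖φ x‖) atBot (nhds 0))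
    (hsupp : ∀ R : ℝ, 0 < R → ¬ (∀ᵐ x : ℝ, R < |x| → φ x = 0))
    (N : ℕ) (hN : 1 ≤ N) (Λ : Fin N → ℝ × ℝ)
    (hpos : ∀ k, 0 < (Λ k).1) (hdist : Function.Injective Λ)
    (c : Fin N → ℂ)
    (hzero : ∀ᵐ x : ℝ, ∑ k : Fin N, c k * φ ((Λ k).1 * x - (Λ k).2) = 0) :
    ∀ k, c k = 0 :=
  fws_linearIndependent_of_superexponential_decay_general φ hint hdecay hsupp N Λ hpos hdist c hzero
end

section
/- Let φ : ℝ → ℂ be the Gaussian φ(x) = e^{−x²}. Then every finite wavelet system generated by φ is linearly independent: for any pairwise distinct pairs (λ_1, β_1), …, (λ_N, β_N) ∈ (0, ∞) × ℝ and any c_1, …, c_N ∈ ℂ, if Σ_{k=1}^N c_k e^{−(λ_k x − β_k)²} = 0 for all x ∈ ℝ, then c_1 = ⋯ = c_N = 0. -/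
/-!
Expanding the square, `exp (-(λx - β)²) = exp (-β²) · exp (a x² + b x)` with
`(a, b) = (-λ², 2λβ)`, and `(λ, β) ↦ (-λ², 2λβ)` is injective on `λ > 0`. The functions
`x ↦ exp (a x² + b x)` with distinct `(a, b)` are linearly independent: in a vanishing
combination, the term whose exponent `(a, b)` is lexicographically largest dominates all
others as `x → ∞`, so its coefficient is zero, and induction removes the terms one by one.
-/

open Filter Topology

noncomputable def expQuadratic (p : ℝ × ℝ) (x : ℝ) : ℂ :=
  Real.exp (p.1 * x ^ 2 + p.2 * x)

lemma expQuadratic_mul (p q : ℝ × ℝ) (x : ℝ) :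
    expQuadratic p x * expQuadratic q x = expQuadratic (p + q) x := by
  simp only [expQuadratic, ← Complex.ofReal_mul, ← Real.exp_add, Prod.fst_add, Prod.snd_add]
  ring_nf

lemma tendsto_quadratic_atBot {p : ℝ × ℝ} (hp : toLex p < toLex 0) :
    Tendsto (fun x : ℝ => p.1 * x ^ 2 + p.2 * x) atTop atBot := by
  rcases Prod.Lex.toLex_lt_toLex.mp hp with ha | ⟨ha, hb⟩
  · have hlin : Tendsto (fun x : ℝ => p.1 * x + p.2) atTop atBot :=
      tendsto_atBot_add_const_right _ _ (tendsto_id.const_mul_atTop_of_neg ha)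
    exact (tendsto_id.atTop_mul_atBot₀ hlin).congr fun x => by simp only [id]; ring
  · simpa [ha] using tendsto_id.const_mul_atTop_of_neg hb

lemma tendsto_expQuadratic_atTop_nhds_zero {p : ℝ × ℝ} (hp : toLex p < toLex 0) :
    Tendsto (expQuadratic p) atTop (𝓝 0) := by
  have h := (Complex.continuous_ofReal.tendsto 0).comp
    (Real.tendsto_exp_atBot.comp (tendsto_quadratic_atBot hp))
  rwa [Complex.ofReal_zero] at h

lemma eq_zero_of_add_sum_expQuadratic_eq_zero {s : Finset (ℝ × ℝ)} {p : ℝ × ℝ} (c : ℝ × ℝ → ℂ)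
    (hs : ∀ q ∈ s, toLex q < toLex p)
    (h : ∀ x, c p * expQuadratic p x + ∑ q ∈ s, c q * expQuadratic q x = 0) : c p = 0 := by
  have hrescaled : ∀ x, c p + ∑ q ∈ s, c q * expQuadratic (q - p) x = 0 := fun x => by
    have hx := congrArg (· * expQuadratic (-p) x) (h x)
    simp only [add_mul, Finset.sum_mul, mul_assoc, expQuadratic_mul, zero_mul] at hx
    simpa [expQuadratic, sub_eq_add_neg] using hx
  have hlim : Tendsto (fun x => c p + ∑ q ∈ s, c q * expQuadratic (q - p) x) atTop
      (𝓝 (c p + ∑ q ∈ s, c q * 0)) :=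
    tendsto_const_nhds.add <| tendsto_finsetSum _ fun q hq =>
      (tendsto_expQuadratic_atTop_nhds_zero (sub_neg.mpr (hs q hq))).const_mul (c q)
  simp only [hrescaled, mul_zero, Finset.sum_const_zero, add_zero] at hlim
  exact tendsto_nhds_unique hlim tendsto_const_nhds

theorem linearIndependent_expQuadratic : LinearIndependent ℂ expQuadratic := by
  classical
  rw [linearIndependent_iff']
  refine fun s => Finset.induction_on_max_value toLex s (by simp)
    fun p s hp hmax ih c hsum => ?_
  rw [Finset.sum_insert hp] at hsum
  have hsum_apply : ∀ x, c p * expQuadratic p x + ∑ q ∈ s, c q * expQuadratic q x = 0 :=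
    fun x => by simpa using congrFun hsum x
  have hlt : ∀ q ∈ s, toLex q < toLex p := fun q hq =>
    (hmax q hq).lt_of_ne (toLex.injective.ne (ne_of_mem_of_not_mem hq hp))
  have hcp : c p = 0 := eq_zero_of_add_sum_expQuadratic_eq_zero c hlt hsum_apply
  have hrest : ∑ q ∈ s, c q • expQuadratic q = 0 := by simpa [hcp] using hsum
  intro q hq
  rcases Finset.mem_insert.mp hq with rfl | hq
  · exact hcp
  · exact ih c hrest q hq

lemma injOn_neg_sq_two_mul :
    Set.InjOn (fun q : ℝ × ℝ => (-q.1 ^ 2, 2 * q.1 * q.2)) {q | 0 < q.1} := by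
  rintro ⟨l, b⟩ (hl : 0 < l) ⟨l', b'⟩ (hl' : 0 < l') h
  simp only [Prod.mk.injEq, neg_inj] at h
  obtain rfl : l = l' := (pow_left_inj₀ hl.le hl'.le two_ne_zero).mp h.1
  simp_all [hl.ne']

lemma exp_neg_sub_sq (l b x : ℝ) :
    (Real.exp (-(l * x - b) ^ 2) : ℂ) =
      Real.exp (-b ^ 2) * expQuadratic (-l ^ 2, 2 * l * b) x := by
  rw [expQuadratic, ← Complex.ofReal_mul, ← Real.exp_add]
  ring_nf

theorem fws_linearIndependent_gaussian_general
    (N : ℕ) (Λ : Fin N → ℝ × ℝ)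
    (hpos : ∀ k, 0 < (Λ k).1) (hdist : Function.Injective Λ)
    (c : Fin N → ℂ)
    (hzero : ∀ x : ℝ,
      ∑ k : Fin N, c k * (Real.exp (-((Λ k).1 * x - (Λ k).2) ^ 2) : ℂ) = 0) :
    ∀ k, c k = 0 := by
  set P : Fin N → ℝ × ℝ := fun k => (-(Λ k).1 ^ 2, 2 * (Λ k).1 * (Λ k).2)
  have hP : Function.Injective P := fun i j hij =>
    hdist (injOn_neg_sq_two_mul (hpos i) (hpos j) hij)
  have hsum : ∑ k, (c k * Real.exp (-(Λ k).2 ^ 2)) • expQuadratic (P k) = 0 := by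
    funext x
    simp only [Finset.sum_apply, Pi.smul_apply, smul_eq_mul, Pi.zero_apply, mul_assoc]
    simpa only [exp_neg_sub_sq] using hzero x
  intro k
  have hk := Fintype.linearIndependent_iff.mp (linearIndependent_expQuadratic.comp P hP) _ hsum k
  simpa [Real.exp_ne_zero] using hk

/-- Every finite wavelet system generated by the Gaussian `φ(x) = exp(-x²)` is linearly
independent. -/
theorem fws_linearIndependent_gaussian
    (N : ℕ) (hN : 1 ≤ N) (Λ : Fin N → ℝ × ℝ)
    (hpos : ∀ k, 0 < (Λ k).1) (hdist : Function.Injective Λ)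
    (c : Fin N → ℂ)
    (hzero : ∀ x : ℝ,
      ∑ k : Fin N, c k * (Real.exp (-((Λ k).1 * x - (Λ k).2) ^ 2) : ℂ) = 0) :
    ∀ k, c k = 0 :=
  fws_linearIndependent_gaussian_general N Λ hpos hdist c hzero
end

section
/- Let p and q be real polynomials with p ≠ 0, q(x) ≠ 0 for every x ∈ ℝ, and deg p < deg q, and let φ : ℝ → ℂ be the (square integrable) rational function φ(x) = p(x)/q(x). Then every finite wavelet system generated by φ is linearly independent: for any pairwise distinct pairs (λ_1, β_1), …, (λ_N, β_N) ∈ (0, ∞) × ℝ and any c_1, …, c_N ∈ ℂ, if Σ_{k=1}^N c_k φ(λ_k x − β_k) = 0 for all x ∈ ℝ, then c_1 = ⋯ = c_N = 0. -/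
open Polynomial

/-!
Write `p / q` in lowest terms `P / Q`. As `Q` has real coefficients and no real zeros, it has a
root in the upper half-plane; let `ρ` be its highest root, and the rightmost among the highest.
If some `c k` were nonzero, choose among those `k` the index `s` with least dilation `λ_s` and,
among those, greatest shift `β_s`, and put `z = (ρ + β_s) / λ_s`. For another such `l`, the point
`λ_l z - β_l` lies strictly above `ρ` when `λ_l > λ_s`, and strictly to the right of `ρ` when
`λ_l = λ_s`, so it is not a root of `Q`. Clearing denominators turns the vanishing sum into a
polynomial identity, valid on all of `ℂ`; at `z` every term except the `s`-th contains the factor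
`Q(ρ) = 0`, which leaves `c_s P(ρ) = 0`, while `P(ρ) ≠ 0` by coprimality.
-/

def imReKey (z : ℂ) : ℝ ×ₗ ℝ := toLex (z.im, z.re)

def scaleShiftKey (u : ℝ × ℝ) : ℝ ×ₗ ℝ := toLex (u.1, -u.2)

theorem eq_of_scaleShiftKey_le_of_imReKey_le {z : ℂ} (hz : 0 < z.im) {u v : ℝ × ℝ}
    (huv : scaleShiftKey u ≤ scaleShiftKey v)
    (hvu : imReKey (v.1 * z - v.2) ≤ imReKey (u.1 * z - u.2)) : v = u := by
  simp only [scaleShiftKey, imReKey, Prod.Lex.toLex_le_toLex, Complex.sub_im, Complex.sub_re,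
    Complex.mul_im, Complex.mul_re, Complex.ofReal_re, Complex.ofReal_im, zero_mul, add_zero,
    sub_zero] at huv hvu
  rcases huv with hlt | ⟨heq, hle⟩
  · have := mul_lt_mul_of_pos_right hlt hz
    rcases hvu with h | ⟨h, -⟩ <;> linarith
  · rw [heq] at hvu
    rcases hvu with hlt | ⟨-, hle'⟩
    · exact absurd hlt (lt_irrefl _)
    · exact Prod.ext heq.symm (by linarith)

theorem exists_isRoot_forall_imReKey_le {Q : ℂ[X]} (hQ : Q ≠ 0) {z : ℂ} (hz : Q.IsRoot z) :
    ∃ ρ, Q.IsRoot ρ ∧ ∀ w, Q.IsRoot w → imReKey w ≤ imReKey ρ := by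
  have hmem : ∀ w, w ∈ Q.roots.toFinset ↔ Q.IsRoot w := by simp [hQ]
  obtain ⟨ρ, hρ, hmax⟩ := Q.roots.toFinset.exists_max_image imReKey ⟨z, (hmem z).2 hz⟩
  exact ⟨ρ, (hmem ρ).1 hρ, fun w hw => hmax w ((hmem w).2 hw)⟩

theorem exists_isRoot_map_im_pos {q : ℝ[X]} (hdeg : 0 < q.degree)
    (hq : ∀ x : ℝ, q.eval x ≠ 0) : ∃ z : ℂ, (q.map (algebraMap ℝ ℂ)).IsRoot z ∧ 0 < z.im := by
  simp only [IsRoot, eval_map_algebraMap]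
  obtain ⟨z, hz⟩ := Complex.exists_root (f := q.map (algebraMap ℝ ℂ)) (by rwa [degree_map])
  rw [IsRoot, eval_map_algebraMap] at hz
  rcases lt_trichotomy z.im 0 with him | him | him
  · exact ⟨starRingEnd ℂ z, by rw [aeval_conj, hz, map_zero], by simpa⟩
  · refine absurd ?_ (hq z.re)
    rw [show z = z.re from Complex.ext rfl (by simp [him])] at hz
    exact Complex.ofReal_eq_zero.1 ((ofReal_eval (K := ℂ) q z.re).trans hz)
  · exact ⟨z, hz, him⟩

theorem IsCoprime.eval_ne_zero_of_isRoot {R : Type*} [CommRing R] [Nontrivial R] {P Q : R[X]}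
    (hPQ : IsCoprime P Q) {ρ : R} (hρ : Q.IsRoot ρ) : P.eval ρ ≠ 0 := by
  have := hPQ.map (evalRingHom ρ)
  rw [coe_evalRingHom, hρ.eq_zero, isCoprime_zero_right] at this
  exact this.ne_zero

theorem sum_mul_prod_erase_eq_zero_of_sum_div_eq_zero {K ι : Type*} [Field K] [DecidableEq ι]
    {s : Set K} (hs : s.Infinite) {S : Finset ι} {F G : ι → K[X]}
    (hG : ∀ x ∈ s, ∀ k ∈ S, (G k).eval x ≠ 0)
    (h : ∀ x ∈ s, ∑ k ∈ S, (F k).eval x / (G k).eval x = 0) :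
    ∑ k ∈ S, F k * ∏ l ∈ S.erase k, G l = 0 := by
  refine eq_zero_of_infinite_isRoot _ (hs.mono fun x hx => ?_)
  calc eval x (∑ k ∈ S, F k * ∏ l ∈ S.erase k, G l)
      = (∑ k ∈ S, (F k).eval x / (G k).eval x) * ∏ l ∈ S, (G l).eval x := by
        simp only [eval_finsetSum, eval_mul, eval_prod, Finset.sum_mul]
        refine Finset.sum_congr rfl fun k hk => ?_
        rw [← Finset.mul_prod_erase S _ hk, ← mul_assoc, div_mul_cancel₀ _ (hG x hx k hk)]
    _ = 0 := by rw [h x hx, zero_mul]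

theorem sum_mul_eval_mul_prod_erase_eq_zero {ι : Type*} [DecidableEq ι] {P Q : ℂ[X]}
    (hQ : ∀ x : ℝ, Q.eval (x : ℂ) ≠ 0) {Λ : ι → ℝ × ℝ} {c : ι → ℂ} {S : Finset ι}
    (h : ∀ x : ℝ, ∑ k ∈ S, c k * (P.eval (((Λ k).1 * x - (Λ k).2 : ℝ) : ℂ) /
      Q.eval (((Λ k).1 * x - (Λ k).2 : ℝ) : ℂ)) = 0) (z : ℂ) :
    ∑ k ∈ S, c k * P.eval ((Λ k).1 * z - (Λ k).2) *
      ∏ l ∈ S.erase k, Q.eval ((Λ l).1 * z - (Λ l).2) = 0 := by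
  have hid := sum_mul_prod_erase_eq_zero_of_sum_div_eq_zero (S := S)
    (Set.infinite_range_of_injective Complex.ofReal_injective)
    (F := fun k => C (c k) * P.comp (C ((Λ k).1 : ℂ) * X - C ((Λ k).2 : ℂ)))
    (G := fun k => Q.comp (C ((Λ k).1 : ℂ) * X - C ((Λ k).2 : ℂ)))
    (by rintro _ ⟨x, rfl⟩ k -; simpa using hQ ((Λ k).1 * x - (Λ k).2))
    (by rintro _ ⟨x, rfl⟩; simpa [mul_div_assoc] using h x)
  simpa [eval_finsetSum, eval_prod] using congrArg (eval z) hid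

theorem eq_zero_of_sum_mul_prod_erase_eq_zero {R ι : Type*} [CommRing R] [IsDomain R]
    [DecidableEq ι] {S : Finset ι} {f g : ι → R} {s : ι} (hs : s ∈ S) (hgs : g s = 0)
    (hg : ∀ l ∈ S, l ≠ s → g l ≠ 0) (h : ∑ k ∈ S, f k * ∏ l ∈ S.erase k, g l = 0) :
    f s = 0 := by
  rw [Finset.sum_eq_single_of_mem s hs fun k _ hks => by
    rw [Finset.prod_eq_zero (Finset.mem_erase.2 ⟨hks.symm, hs⟩) hgs, mul_zero]] at h
  refine (mul_eq_zero.1 h).resolve_right (Finset.prod_ne_zero_iff.2 fun l hl => ?_)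
  exact hg l (Finset.mem_of_mem_erase hl) (Finset.ne_of_mem_erase hl)

theorem eq_zero_of_sum_mul_eval_div_eval_eq_zero {ι : Type*} [Fintype ι] {P Q : ℂ[X]}
    (hPQ : IsCoprime P Q) (hQ : ∀ x : ℝ, Q.eval (x : ℂ) ≠ 0)
    (hroot : ∃ z, Q.IsRoot z ∧ 0 < z.im) {Λ : ι → ℝ × ℝ} (hpos : ∀ k, 0 < (Λ k).1)
    (hΛ : Function.Injective Λ) {c : ι → ℂ}
    (h : ∀ x : ℝ, ∑ k, c k * (P.eval (((Λ k).1 * x - (Λ k).2 : ℝ) : ℂ) /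
      Q.eval (((Λ k).1 * x - (Λ k).2 : ℝ) : ℂ)) = 0) :
    ∀ k, c k = 0 := by
  classical
  by_contra! hc
  set S := Finset.univ.filter (c · ≠ 0)
  obtain ⟨s, hs, hsmin⟩ :=
    S.exists_min_image (scaleShiftKey ∘ Λ) (by simpa [S, Finset.Nonempty] using hc)
  obtain ⟨z₀, hz₀, hz₀im⟩ := hroot
  obtain ⟨ρ, hρ, hρmax⟩ :=
    exists_isRoot_forall_imReKey_le (by rintro rfl; exact hQ 0 eval_zero) hz₀
  have hρim : 0 < ρ.im := hz₀im.trans_le (Prod.Lex.monotone_fst _ _ (hρmax z₀ hz₀))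
  set z : ℂ := (ρ + (Λ s).2) / (Λ s).1
  have hzs : ((Λ s).1 : ℂ) * z - (Λ s).2 = ρ := by
    have : ((Λ s).1 : ℂ) ≠ 0 := by exact_mod_cast (hpos s).ne'
    simp only [z]; field_simp; ring
  have hz : 0 < z.im := by
    have him : (Λ s).1 * z.im = ρ.im := by simpa using congrArg Complex.im hzs
    exact pos_of_mul_pos_right (him ▸ hρim) (hpos s).le
  have hpoles : ∀ l ∈ S, l ≠ s → Q.eval ((Λ l).1 * z - (Λ l).2) ≠ 0 := fun l hl hls hl0 =>
    hls (hΛ (eq_of_scaleShiftKey_le_of_imReKey_le hz (hsmin l hl) (hzs ▸ hρmax _ hl0)))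
  have hS (x : ℝ) := (Finset.sum_filter_of_ne (p := (c · ≠ 0))
    fun k _ hk => left_ne_zero_of_mul hk).trans (h x)
  have hcs := eq_zero_of_sum_mul_prod_erase_eq_zero hs (by rwa [hzs]) hpoles
    (sum_mul_eval_mul_prod_erase_eq_zero hQ hS z)
  rw [hzs] at hcs
  exact mul_ne_zero (Finset.mem_filter.1 hs).2 (hPQ.eval_ne_zero_of_isRoot hρ) hcs

theorem fws_linearIndependent_rational_general
    (p q : Polynomial ℝ) (hp : p ≠ 0) (hq : ∀ x : ℝ, q.eval x ≠ 0)
    (hdeg : p.degree < q.degree)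
    (φ : ℝ → ℂ) (hφ : ∀ x : ℝ, φ x = ((p.eval x / q.eval x : ℝ) : ℂ))
    (N : ℕ) (Λ : Fin N → ℝ × ℝ)
    (hpos : ∀ k, 0 < (Λ k).1) (hdist : Function.Injective Λ)
    (c : Fin N → ℂ)
    (hzero : ∀ x : ℝ, ∑ k : Fin N, c k * φ ((Λ k).1 * x - (Λ k).2) = 0) :
    ∀ k, c k = 0 := by
  obtain ⟨p₁, q₁, g, hrel, rfl, rfl⟩ :=
    UniqueFactorizationMonoid.exists_reduced_factors' p q fun h => hq 0 (by simp [h])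
  have hgq₁ (x : ℝ) : g.eval x ≠ 0 ∧ q₁.eval x ≠ 0 := mul_ne_zero_iff.1 (by simpa using hq x)
  have hq₁ : 0 < q₁.degree := by
    rw [degree_mul, degree_mul,
      WithBot.add_lt_add_iff_left (degree_ne_bot.2 (left_ne_zero_of_mul hp))] at hdeg
    exact (zero_le_degree_iff.2 (right_ne_zero_of_mul hp)).trans_lt hdeg
  have hmap (r : ℝ[X]) (x : ℝ) : (r.map (algebraMap ℝ ℂ)).eval (x : ℂ) = r.eval x := by
    rw [eval_map_algebraMap]; exact (ofReal_eval r x).symm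
  refine eq_zero_of_sum_mul_eval_div_eval_eq_zero (P := p₁.map (algebraMap ℝ ℂ))
    (Q := q₁.map (algebraMap ℝ ℂ)) (hrel.isCoprime.map (mapRingHom (algebraMap ℝ ℂ)))
    (fun x => ?_) (exists_isRoot_map_im_pos hq₁ fun x => (hgq₁ x).2) hpos hdist fun x => ?_
  · simpa [hmap] using (hgq₁ x).2
  · rw [← hzero x]
    refine Finset.sum_congr rfl fun k _ => ?_
    rw [hφ, eval_mul, eval_mul, mul_div_mul_left _ _ (hgq₁ _).1, hmap, hmap, Complex.ofReal_div]

/-- Every finite wavelet system generated by a nonzero square integrable real rational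
function `p/q` (with `q` nowhere vanishing and `deg p < deg q`) is linearly independent. -/
theorem fws_linearIndependent_rational
    (p q : Polynomial ℝ) (hp : p ≠ 0) (hq : ∀ x : ℝ, q.eval x ≠ 0)
    (hdeg : p.degree < q.degree)
    (φ : ℝ → ℂ) (hφ : ∀ x : ℝ, φ x = ((p.eval x / q.eval x : ℝ) : ℂ))
    (N : ℕ) (hN : 1 ≤ N) (Λ : Fin N → ℝ × ℝ)
    (hpos : ∀ k, 0 < (Λ k).1) (hdist : Function.Injective Λ)
    (c : Fin N → ℂ)
    (hzero : ∀ x : ℝ, ∑ k : Fin N, c k * φ ((Λ k).1 * x - (Λ k).2) = 0) :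
    ∀ k, c k = 0 :=
  fws_linearIndependent_rational_general p q hp hq hdeg φ hφ N Λ hpos hdist c hzero
end
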